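/- arXiv:2303.02521 — 10 statements merged into one kernel-verified Lean document; each statement's English description precedes it below -/
import Mathlib

section
/- Let M be a multiplicative submonoid of O_K. Then R_{K,M} contains 0 and 1 and is closed under addition and multiplication (it is a sub-semiring of O_K). If moreover M is a subgroup of the unit group U_K, then R_{K,M} is also closed under negation, hence is a subring of O_K. -/
noncomputable section

/-- A fixed algebraic closure of `ℚ`. -/
abbrev Qbar : Type := AlgebraicClosure ℚ

/-- The ring of integers of a subfield `K` of `ℚ̄`, viewed as a subset of `ℚ̄`. -/
def ringOfInt (K : IntermediateField ℚ Qbar) : Set Qbar :=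
  {x | x ∈ K ∧ IsIntegral ℤ x}

/-- `R_{K,M}` for a multiplicative submonoid `M ⊆ O_K`. -/
def RKM (K : IntermediateField ℚ Qbar) (M : Set Qbar) : Set Qbar :=
  {x | x ∈ ringOfInt K ∧ ∀ ε ∈ M, ∃ δ ∈ M, ∃ w ∈ ringOfInt K,
    δ - 1 = (ε - 1) * x + (ε - 1) ^ 2 * w}

lemma roi_zero (K : IntermediateField ℚ Qbar) : (0 : Qbar) ∈ ringOfInt K :=
  ⟨zero_mem K, isIntegral_zero⟩

lemma roi_one (K : IntermediateField ℚ Qbar) : (1 : Qbar) ∈ ringOfInt K :=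
  ⟨one_mem K, isIntegral_one⟩

lemma roi_add {K : IntermediateField ℚ Qbar} {x y : Qbar}
    (hx : x ∈ ringOfInt K) (hy : y ∈ ringOfInt K) : x + y ∈ ringOfInt K :=
  ⟨add_mem hx.1 hy.1, hx.2.add hy.2⟩

lemma roi_mul {K : IntermediateField ℚ Qbar} {x y : Qbar}
    (hx : x ∈ ringOfInt K) (hy : y ∈ ringOfInt K) : x * y ∈ ringOfInt K :=
  ⟨mul_mem hx.1 hy.1, hx.2.mul hy.2⟩

lemma roi_neg {K : IntermediateField ℚ Qbar} {x : Qbar}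
    (hx : x ∈ ringOfInt K) : -x ∈ ringOfInt K :=
  ⟨neg_mem hx.1, hx.2.neg⟩

lemma roi_sub {K : IntermediateField ℚ Qbar} {x y : Qbar}
    (hx : x ∈ ringOfInt K) (hy : y ∈ ringOfInt K) : x - y ∈ ringOfInt K :=
  ⟨sub_mem hx.1 hy.1, hx.2.sub hy.2⟩

theorem stmt0 (K : IntermediateField ℚ Qbar) (M : Set Qbar)
    (hMO : M ⊆ ringOfInt K) (hM1 : (1 : Qbar) ∈ M)
    (hMmul : ∀ a ∈ M, ∀ b ∈ M, a * b ∈ M) :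
    ((0 : Qbar) ∈ RKM K M ∧ (1 : Qbar) ∈ RKM K M ∧
      ∀ x ∈ RKM K M, ∀ y ∈ RKM K M, x + y ∈ RKM K M ∧ x * y ∈ RKM K M) ∧
    ((∀ ε ∈ M, ∃ ε' ∈ M, ε * ε' = 1) → ∀ x ∈ RKM K M, -x ∈ RKM K M) := by
  constructor
  · refine ⟨⟨roi_zero K, fun ε hε => ⟨1, hM1, 0, roi_zero K, by ring⟩⟩,
      ⟨roi_one K, fun ε hε => ⟨ε, hε, 0, roi_zero K, by ring⟩⟩, ?_⟩
    rintro x ⟨hxO, hx⟩ y ⟨hyO, hy⟩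
    constructor
    · refine ⟨roi_add hxO hyO, ?_⟩
      intro ε hε
      obtain ⟨δx, hδx, wx, hwx, ex⟩ := hx ε hε
      obtain ⟨δy, hδy, wy, hwy, ey⟩ := hy ε hε
      have hεO := hMO hε
      have ex' : δx = 1 + ((ε - 1) * x + (ε - 1) ^ 2 * wx) := by linear_combination ex
      have ey' : δy = 1 + ((ε - 1) * y + (ε - 1) ^ 2 * wy) := by linear_combination ey
      subst ex'; subst ey'
      refine ⟨_, hMmul _ hδx _ hδy,
        wx + wy + (x + (ε - 1) * wx) * (y + (ε - 1) * wy), ?_, by ring⟩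
      exact roi_add (roi_add hwx hwy)
        (roi_mul (roi_add hxO (roi_mul (roi_sub hεO (roi_one K)) hwx))
          (roi_add hyO (roi_mul (roi_sub hεO (roi_one K)) hwy)))
    · refine ⟨roi_mul hxO hyO, ?_⟩
      intro ε hε
      obtain ⟨δx, hδx, wx, hwx, ex⟩ := hx ε hε
      obtain ⟨δ, hδ, wy, hwy, ey⟩ := hy δx hδx
      have hεO := hMO hε
      have ex' : δx = 1 + ((ε - 1) * x + (ε - 1) ^ 2 * wx) := by linear_combination ex
      subst ex'
      have ey' : δ = 1 + (((1 + ((ε - 1) * x + (ε - 1) ^ 2 * wx)) - 1) * y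
          + ((1 + ((ε - 1) * x + (ε - 1) ^ 2 * wx)) - 1) ^ 2 * wy) := by
        linear_combination ey
      subst ey'
      refine ⟨_, hδ, wx * y + (x + (ε - 1) * wx) * (x + (ε - 1) * wx) * wy, ?_, by ring⟩
      exact roi_add (roi_mul hwx hyO)
        (roi_mul (roi_mul (roi_add hxO (roi_mul (roi_sub hεO (roi_one K)) hwx))
          (roi_add hxO (roi_mul (roi_sub hεO (roi_one K)) hwx))) hwy)
  · rintro hinvall x ⟨hxO, hx⟩
    refine ⟨roi_neg hxO, ?_⟩
    intro ε hε
    obtain ⟨δ, hδ, w, hw, ex⟩ := hx ε hε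
    obtain ⟨δ', hδ', hinv⟩ := hinvall δ hδ
    have hεO := hMO hε
    have hδ'O := hMO hδ'
    have ex' : δ = 1 + ((ε - 1) * x + (ε - 1) ^ 2 * w) := by linear_combination ex
    subst ex'
    refine ⟨δ', hδ', -w + (x + (ε - 1) * w) * (x + (ε - 1) * w) * δ', ?_, ?_⟩
    · exact roi_add (roi_neg hw)
        (roi_mul (roi_mul (roi_add hxO (roi_mul (roi_sub hεO (roi_one K)) hw))
          (roi_add hxO (roi_mul (roi_sub hεO (roi_one K)) hw))) hδ'O)
    · linear_combination (1 - ((ε - 1) * x + (ε - 1) ^ 2 * w)) * hinv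
end
end

section
/- Let M be a multiplicative submonoid of O_K that contains a unit of O_K of infinite multiplicative order. Then R_{K,M} is contained in the ring of integers of the field ℚ(M); that is, every x ∈ R_{K,M} lies in the subfield of K generated over ℚ by M. -/
noncomputable section

/-!
If `x ∈ R_{K,M}` is not in `L = ℚ(M)`, some `σ ∈ Gal(ℚ̄/L)` moves it. Applying `σ` to
`δ - 1 = (ε - 1) x + (ε - 1)² w` with `ε = uⁿ` shows that the nonzero algebraic integer
`σ x - x` is divisible by `uⁿ - 1` for every `n > 0`. But a nonzero algebraic integer divides
some nonzero `m ∈ ℤ`, and for a prime `p ∤ m` the unit `u` has finite order modulo `p` (the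
ring `ℤ[u]/p` is finite), so `p ∣ uⁿ - 1 ∣ m` for some `n`; as `ℤ → 𝓞` is integral, `p ∣ m`
in `ℤ`, a contradiction.
-/

open NumberField

section IntegralOverInt

variable {S : Type*} [CommRing S]

theorem exists_intCast_ne_zero_dvd [IsDomain S] {y : S} (hy : IsIntegral ℤ y) (hy0 : y ≠ 0) :
    ∃ m : ℤ, m ≠ 0 ∧ y ∣ (m : S) := by
  obtain ⟨m, hm, hm0⟩ := Submodule.exists_mem_ne_zero_of_ne_bot <|
    Ideal.comap_ne_bot_of_integral_mem hy0 (Ideal.mem_span_singleton_self y) hy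
  exact ⟨m, hm0, by simpa [Ideal.mem_span_singleton] using hm⟩

theorem Prime.dvd_of_intCast_dvd_intCast [CharZero S] [Algebra.IsIntegral ℤ S] {p m : ℤ}
    (hp : Prime p) (h : (p : S) ∣ (m : S)) : p ∣ m := by
  have : (Ideal.span {p}).IsMaximal :=
    PrincipalIdealRing.isMaximal_of_irreducible hp.irreducible
  obtain ⟨Q, -, hQ⟩ := Ideal.exists_maximal_ideal_liesOver_of_isIntegral (S := S) (Ideal.span {p})
  have hpQ : p ∈ Q.under ℤ := hQ.over ▸ Ideal.mem_span_singleton_self p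
  rw [← Ideal.mem_span_singleton, hQ.over]
  simp only [Ideal.under, Ideal.mem_comap, eq_intCast] at hpQ ⊢
  exact Q.mem_of_dvd h hpQ

theorem exists_pow_sub_one_dvd_intCast [IsDomain S] [CharZero S] (u : Sˣ)
    (hu : IsIntegral ℤ (u : S)) {q : ℤ} (hq : q ≠ 0) :
    ∃ n, 0 < n ∧ (q : S) ∣ (u : S) ^ n - 1 := by
  let R := Algebra.adjoin ℤ {(u : S)}
  have := Algebra.finite_adjoin_simple_of_isIntegral hu
  have : Module.Free ℤ R := Module.free_of_finite_type_torsion_free'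
  let I : Ideal R := Ideal.span {(q : R)}
  have : Finite (R ⧸ I) := Ideal.finiteQuotientOfFreeOfNeBot I <| by
    simpa [I, Ideal.span_singleton_eq_bot] using hq
  let v : R := ⟨u, Algebra.self_mem_adjoin_singleton ℤ _⟩
  obtain ⟨a, b, hab, heq⟩ :=
    Finite.exists_ne_map_eq_of_infinite fun n : ℕ => Ideal.Quotient.mk I (v ^ n)
  wlog hlt : a < b generalizing a b
  · exact this b a hab.symm heq.symm (hab.lt_or_gt.resolve_left hlt)
  obtain ⟨t, ht⟩ := Ideal.mem_span_singleton.mp (Ideal.Quotient.eq.mp heq.symm)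
  have ht' : (u : S) ^ b - (u : S) ^ a = q * t := by simpa [v] using congrArg Subtype.val ht
  refine ⟨b - a, by omega, (↑u⁻¹ : S) ^ a * t, ?_⟩
  rw [mul_left_comm, ← ht', mul_sub, ← mul_pow, ← pow_mul_pow_sub _ hlt.le]
  simp [← mul_assoc, ← mul_pow]

theorem eq_zero_of_forall_pow_sub_one_dvd [IsDomain S] [CharZero S] [Algebra.IsIntegral ℤ S]
    (u : Sˣ) {y : S} (h : ∀ n, 0 < n → (u : S) ^ n - 1 ∣ y) : y = 0 := by
  by_contra hy
  obtain ⟨m, hm0, hym⟩ := exists_intCast_ne_zero_dvd (Algebra.IsIntegral.isIntegral y) hy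
  obtain ⟨p, hmp, hp⟩ := Nat.exists_infinite_primes (m.natAbs + 1)
  have hp' : Prime (p : ℤ) := Nat.prime_iff_prime_int.mp hp
  obtain ⟨n, hn, hpu⟩ :=
    exists_pow_sub_one_dvd_intCast u (Algebra.IsIntegral.isIntegral _) hp'.ne_zero
  have hpm : p ∣ m.natAbs :=
    Int.natAbs_dvd_natAbs.mpr (hp'.dvd_of_intCast_dvd_intCast (hpu.trans ((h n hn).trans hym)))
  have := Nat.le_of_dvd (Int.natAbs_pos.mpr hm0) hpm
  omega

end IntegralOverInt

theorem RingHom.map_sub_self_eq_sub_one_mul {F : Type*} [CommRing F] [IsDomain F] (σ : F →+* F)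
    {x w ε δ : F} (hε : σ ε = ε) (hδ : σ δ = δ) (hε1 : ε ≠ 1)
    (h : δ - 1 = (ε - 1) * x + (ε - 1) ^ 2 * w) : σ x - x = (ε - 1) * (w - σ w) := by
  have hσ := congrArg σ h
  simp only [map_sub, map_add, map_mul, map_pow, map_one, hε, hδ] at hσ
  refine mul_left_cancel₀ (sub_ne_zero.mpr hε1) ?_
  linear_combination h - hσ

theorem IntermediateField.exists_mem_fixingSubgroup_ne_of_notMem {k K : Type*} [Field k]
    [Field K] [Algebra k K] [IsGalois k K] (L : IntermediateField k K) {x : K} (hx : x ∉ L) :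
    ∃ σ ∈ L.fixingSubgroup, σ x ≠ x := by
  by_contra! h
  exact hx <| InfiniteGalois.fixedField_fixingSubgroup L ▸ (mem_fixedField_iff _ x).mpr h

-- `Qbar` carries the `ℚ`-algebra structure `DivisionRing.toRatAlgebra`, not the one for which
-- Mathlib registers `IsAlgClosure ℚ (AlgebraicClosure ℚ)`.
instance : IsAlgClosure ℚ Qbar := ⟨inferInstance, AlgebraicClosure.isAlgebraic ℚ⟩

theorem stmt1_general (K : IntermediateField ℚ Qbar) (M : Set Qbar)
    (hMO : M ⊆ ringOfInt K)
    (hMmul : ∀ a ∈ M, ∀ b ∈ M, a * b ∈ M)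
    (hu : ∃ u ∈ M, (∃ u' ∈ ringOfInt K, u * u' = 1) ∧ ∀ n : ℕ, 0 < n → u ^ n ≠ 1) :
    ∀ x ∈ RKM K M, x ∈ ringOfInt (IntermediateField.adjoin ℚ M) := by
  obtain ⟨u, huM, ⟨u', hu'O, huu'⟩, hord⟩ := hu
  rintro x ⟨⟨-, hx⟩, hrel⟩
  refine ⟨?_, hx⟩
  by_contra hxL
  obtain ⟨σ, hσ, hσx⟩ := (IntermediateField.adjoin ℚ M).exists_mem_fixingSubgroup_ne_of_notMem hxL
  have hσM : ∀ a ∈ M, σ a = a := fun a ha =>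
    (IntermediateField.mem_fixingSubgroup_iff _ σ).mp hσ a (IntermediateField.subset_adjoin ℚ M ha)
  have hpow : ∀ n, 0 < n → u ^ n ∈ M := fun n hn =>
    Nat.le_induction (by simpa using huM) (fun k _ ih => by rw [pow_succ]; exact hMmul _ ih _ huM)
      n hn
  have hσint : ∀ {z : Qbar}, IsIntegral ℤ z → IsIntegral ℤ (σ z) := fun hz =>
    hz.map (σ.toAlgHom.restrictScalars ℤ)
  -- `𝓞 Qbar` rather than `integralClosure ℤ Qbar`: on the latter, instance search finds a
  -- `ℤ`-algebra structure other than `Ring.toIntAlgebra`, which the lemmas above use.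
  let U : (𝓞 Qbar)ˣ := Units.mkOfMulEqOne ⟨u, (hMO huM).2⟩ ⟨u', hu'O.2⟩ (Subtype.ext huu')
  have : (⟨σ x - x, (hσint hx).sub hx⟩ : 𝓞 Qbar) = 0 := by
    refine eq_zero_of_forall_pow_sub_one_dvd U fun n hn => ?_
    obtain ⟨δ, hδ, w, ⟨-, hw⟩, h⟩ := hrel _ (hpow n hn)
    refine ⟨⟨w - σ w, hw.sub (hσint hw)⟩, Subtype.ext ?_⟩
    exact (σ : Qbar →+* Qbar).map_sub_self_eq_sub_one_mul (hσM _ (hpow n hn)) (hσM δ hδ)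
      (hord n hn) h
  exact hσx (sub_eq_zero.mp (congrArg Subtype.val this))

theorem stmt1 (K : IntermediateField ℚ Qbar) (M : Set Qbar)
    (hMO : M ⊆ ringOfInt K) (hM1 : (1 : Qbar) ∈ M)
    (hMmul : ∀ a ∈ M, ∀ b ∈ M, a * b ∈ M)
    (hu : ∃ u ∈ M, (∃ u' ∈ ringOfInt K, u * u' = 1) ∧ ∀ n : ℕ, 0 < n → u ^ n ≠ 1) :
    ∀ x ∈ RKM K M, x ∈ ringOfInt (IntermediateField.adjoin ℚ M) :=
  stmt1_general K M hMO hMmul hu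
end
end

section
/- Let M be a subgroup of the unit group U_K, and let F′ ⊆ K denote the field of fractions of the ring R_{K,M} (the subfield of K generated by R_{K,M}). Then {x ∈ O_K : there exist y, z ∈ R_{K,M} with y ≠ 0 and x·y = z} equals O_K ∩ F′, the full ring of integers of F′. -/
/-! The defining condition of `R_{K,M}` is stable under sums (multiply the witnesses `δ`),
products (feed the witness `δ` of `a` back in as the `ε` for `b`) and negation (use
`δ⁻¹ ∈ M`), so `R_{K,M}` is a subring of `ℚ̄`. In a field of characteristic zero the
subfield generated over `ℚ` by a subring `R` is its field of fractions
`{z / y : y, z ∈ R, y ≠ 0}`; intersecting with `O_K` gives both sides of the identity. -/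

noncomputable section

namespace IntermediateField

theorem adjoin_rat_toSubfield {L : Type*} [Field L] [Algebra ℚ L] (S : Set L) :
    (adjoin ℚ S).toSubfield = Subfield.closure S := by
  rw [adjoin_toSubfield]
  refine le_antisymm (Subfield.closure_le.mpr (Set.union_subset ?_ Subfield.subset_closure))
    (Subfield.closure_mono Set.subset_union_right)
  rintro _ ⟨q, rfl⟩
  simp

theorem mem_adjoin_rat_subring_iff {L : Type*} [Field L] [Algebra ℚ L] (R : Subring L)
    {x : L} : x ∈ adjoin ℚ (R : Set L) ↔ ∃ y ∈ R, ∃ z ∈ R, y ≠ 0 ∧ x * y = z := by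
  rw [← mem_toSubfield, adjoin_rat_toSubfield, Subfield.mem_closure_iff, Subring.closure_eq]
  constructor
  · rintro ⟨z, hz, y, hy, rfl⟩
    rcases eq_or_ne y 0 with rfl | hy0
    · exact ⟨1, R.one_mem, 0, R.zero_mem, one_ne_zero, by simp⟩
    · exact ⟨y, hy, z, hz, hy0, div_mul_cancel₀ z hy0⟩
  · rintro ⟨y, hy, z, hz, hy0, rfl⟩
    exact ⟨x * y, hz, y, hy, mul_div_cancel_right₀ x hy0⟩

end IntermediateField

def ringOfIntSubring (K : IntermediateField ℚ Qbar) : Subring Qbar :=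
  K.toSubring ⊓ (integralClosure ℤ Qbar).toSubring

namespace RKM

variable {K : IntermediateField ℚ Qbar} {M : Set Qbar}

local notation "O" => ringOfIntSubring K

theorem one_mem : (1 : Qbar) ∈ RKM K M :=
  ⟨(O).one_mem, fun ε hε => ⟨ε, hε, 0, (O).zero_mem, by ring⟩⟩

theorem zero_mem (hM1 : (1 : Qbar) ∈ M) : (0 : Qbar) ∈ RKM K M :=
  ⟨(O).zero_mem, fun _ _ => ⟨1, hM1, 0, (O).zero_mem, by ring⟩⟩

theorem add_mem (hMO : M ⊆ ringOfInt K) (hMmul : ∀ a ∈ M, ∀ b ∈ M, a * b ∈ M)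
    {a b : Qbar} (ha : a ∈ RKM K M) (hb : b ∈ RKM K M) : a + b ∈ RKM K M := by
  refine ⟨(O).add_mem ha.1 hb.1, fun ε hε => ?_⟩
  obtain ⟨δ₁, hδ₁, w₁, hw₁, h₁⟩ := ha.2 ε hε
  obtain ⟨δ₂, hδ₂, w₂, hw₂, h₂⟩ := hb.2 ε hε
  have hε1 : ε - 1 ∈ O := (O).sub_mem (hMO hε) (O).one_mem
  refine ⟨δ₁ * δ₂, hMmul _ hδ₁ _ hδ₂, w₁ + w₂ + (a + (ε - 1) * w₁) * (b + (ε - 1) * w₂),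
    (O).add_mem ((O).add_mem hw₁ hw₂) ((O).mul_mem ((O).add_mem ha.1 ((O).mul_mem hε1 hw₁))
      ((O).add_mem hb.1 ((O).mul_mem hε1 hw₂))), ?_⟩
  rw [eq_add_of_sub_eq h₁, eq_add_of_sub_eq h₂]
  ring

theorem mul_mem (hMO : M ⊆ ringOfInt K) {a b : Qbar} (ha : a ∈ RKM K M)
    (hb : b ∈ RKM K M) : a * b ∈ RKM K M := by
  refine ⟨(O).mul_mem ha.1 hb.1, fun ε hε => ?_⟩
  obtain ⟨δ₁, hδ₁, w₁, hw₁, h₁⟩ := ha.2 ε hε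
  obtain ⟨δ, hδ, w₂, hw₂, h₂⟩ := hb.2 δ₁ hδ₁
  have hε1 : ε - 1 ∈ O := (O).sub_mem (hMO hε) (O).one_mem
  refine ⟨δ, hδ, w₁ * b + (a + (ε - 1) * w₁) ^ 2 * w₂, (O).add_mem ((O).mul_mem hw₁ hb.1)
    ((O).mul_mem ((O).pow_mem ((O).add_mem ha.1 ((O).mul_mem hε1 hw₁)) 2) hw₂), ?_⟩
  rw [eq_add_of_sub_eq h₂, eq_add_of_sub_eq h₁]
  ring

theorem neg_mem (hMO : M ⊆ ringOfInt K) (hMinv : ∀ ε ∈ M, ∃ ε' ∈ M, ε * ε' = 1)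
    {a : Qbar} (ha : a ∈ RKM K M) : -a ∈ RKM K M := by
  refine ⟨(O).neg_mem ha.1, fun ε hε => ?_⟩
  obtain ⟨δ, hδ, w, hw, h⟩ := ha.2 ε hε
  obtain ⟨δ', hδ', hδδ'⟩ := hMinv δ hδ
  have hε1 : ε - 1 ∈ O := (O).sub_mem (hMO hε) (O).one_mem
  refine ⟨δ', hδ', -w + (a + (ε - 1) * w) ^ 2 * δ', (O).add_mem ((O).neg_mem hw)
    ((O).mul_mem ((O).pow_mem ((O).add_mem ha.1 ((O).mul_mem hε1 hw)) 2) (hMO hδ')), ?_⟩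
  obtain rfl : δ = (ε - 1) * a + (ε - 1) ^ 2 * w + 1 := by linear_combination h
  linear_combination (1 - ((ε - 1) * a + (ε - 1) ^ 2 * w)) * hδδ'

def subring (hMO : M ⊆ ringOfInt K) (hM1 : (1 : Qbar) ∈ M)
    (hMmul : ∀ a ∈ M, ∀ b ∈ M, a * b ∈ M) (hMinv : ∀ ε ∈ M, ∃ ε' ∈ M, ε * ε' = 1) :
    Subring Qbar where
  carrier := RKM K M
  one_mem' := one_mem
  zero_mem' := zero_mem hM1
  add_mem' := add_mem hMO hMmul
  mul_mem' := mul_mem hMO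
  neg_mem' := neg_mem hMO hMinv

end RKM

/-- `M` is a subgroup of the unit group `U_K` of `O_K`. -/
theorem stmt2 (K : IntermediateField ℚ Qbar) (M : Set Qbar)
    (hMO : M ⊆ ringOfInt K) (hM1 : (1 : Qbar) ∈ M)
    (hMmul : ∀ a ∈ M, ∀ b ∈ M, a * b ∈ M)
    (hMinv : ∀ ε ∈ M, ∃ ε' ∈ M, ε * ε' = 1) :
    {x | x ∈ ringOfInt K ∧ ∃ y ∈ RKM K M, ∃ z ∈ RKM K M, y ≠ 0 ∧ x * y = z}
      = ringOfInt K ∩ ↑(IntermediateField.adjoin ℚ (RKM K M)) := by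
  ext x
  exact and_congr_right fun _ =>
    (IntermediateField.mem_adjoin_rat_subring_iff (RKM.subring hMO hM1 hMmul hMinv)).symm
end
end

section
/- Let K ⊆ L be number fields (so L/K is a finite extension). Suppose ε is a unit of O_K, x ∈ O_K, and δ is a unit of O_L satisfying (ε - 1)·x ≡ δ - 1 (mod (ε - 1)²·O_L). Then (ε - 1)·[L:K]·x ≡ N_{L/K}(δ) - 1 (mod (ε - 1)²·O_K), where N_{L/K} denotes the field norm from L to K (which maps units of O_L to units of O_K). -/
noncomputable section

open NumberField

/-!
Write `π = ε - 1`. The hypothesis says `δ = 1 + π u` with `u = x + π w`, `w ∈ O_L`. Over an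
algebraic closure, `N(δ) = ∏_σ (1 + π σu) ≡ 1 + π ∑_σ σu = 1 + π Tr(u)` modulo `π²` times an
algebraic integer, and `Tr(u) = [L:K] x + π Tr(w)`. The quotient `(N(δ) - 1 - π Tr(u)) / π²`
lies in `K` and is integral, hence in `O_K`.
-/

theorem exists_prod_one_add_mul_eq {R ι : Type*} [CommRing R] (π : R) (s : Finset ι)
    (v : ι → R) : ∃ S : R, ∏ i ∈ s, (1 + π * v i) = 1 + π * ∑ i ∈ s, v i + π ^ 2 * S := by
  classical
  induction s using Finset.cons_induction with
  | empty => exact ⟨0, by simp⟩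
  | cons a s ha ih =>
    obtain ⟨S, hS⟩ := ih
    refine ⟨S + v a * ∑ i ∈ s, v i + π * v a * S, ?_⟩
    rw [Finset.prod_cons, hS, Finset.sum_cons]
    ring

namespace NumberField.RingOfIntegers

theorem exists_eq_mul_of_algebraMap_eq_mul {K E : Type*} [Field K] [Field E]
    [Algebra K E] (a : K) (b : 𝓞 K) {T : E} (hT : IsIntegral ℤ T)
    (h : algebraMap K E a = algebraMap K E b * T) : ∃ s : 𝓞 K, a = b * s := by
  by_cases hb : (b : K) = 0
  · refine ⟨0, ?_⟩
    simpa [hb] using h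
  · have hquot : algebraMap K E (a / b) = T := by
      rw [map_div₀, h, mul_div_cancel_left₀ _ ((map_ne_zero _).mpr hb)]
    refine ⟨⟨a / b, ?_⟩, (mul_div_cancel₀ a hb).symm⟩
    exact (isIntegral_algebraMap_iff (algebraMap K E).injective).mp (hquot ▸ hT)

theorem exists_norm_one_add_mul_eq {K L : Type*} [Field K] [Field L]
    [Algebra K L] [FiniteDimensional K L] [Algebra.IsSeparable K L] (π : 𝓞 K) (u : 𝓞 L) :
    ∃ s : 𝓞 K, Algebra.norm K (1 + algebraMap K L π * u)
      = 1 + π * Algebra.trace K L u + π ^ 2 * s := by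
  let E := AlgebraicClosure K
  let R := integralClosure ℤ E
  obtain ⟨S, hS⟩ := exists_prod_one_add_mul_eq (R := R)
    ⟨algebraMap K E π, π.2.map (algebraMap K E).toIntAlgHom⟩ Finset.univ
    (fun σ : L →ₐ[K] E => ⟨σ u, u.2.map (σ : L →+* E).toIntAlgHom⟩)
  apply_fun ((↑) : R → E) at hS
  push_cast at hS
  have hkey : algebraMap K E (Algebra.norm K (1 + algebraMap K L π * u) - 1
      - π * Algebra.trace K L u) = algebraMap K E ((π ^ 2 : 𝓞 K) : K) * S := by
    rw [map_sub, map_sub, map_mul, Algebra.norm_eq_prod_embeddings, trace_eq_sum_embeddings]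
    simp only [map_add, map_one, map_mul, AlgHom.commutes]
    rw [hS]
    push_cast
    ring
  obtain ⟨s, hs⟩ := exists_eq_mul_of_algebraMap_eq_mul _ _ S.2 hkey
  exact ⟨s, by push_cast at hs; linear_combination hs⟩

end NumberField.RingOfIntegers

theorem stmt3 (K L : Type) [Field K] [NumberField K] [Field L] [NumberField L]
    [Algebra K L] (ε : (𝓞 K)ˣ) (x : 𝓞 K) (δ : (𝓞 L)ˣ)
    (hcong : ∃ w : 𝓞 L,
      (δ : 𝓞 L) - 1 - algebraMap (𝓞 K) (𝓞 L) ((ε : 𝓞 K) - 1) * algebraMap (𝓞 K) (𝓞 L) x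
        = (algebraMap (𝓞 K) (𝓞 L) ((ε : 𝓞 K) - 1)) ^ 2 * w) :
    ∃ w : 𝓞 K,
      Algebra.norm K ((δ : 𝓞 L) : L) - 1
          - (((ε : 𝓞 K) : K) - 1) * (Module.finrank K L : K) * ((x : K))
        = ((((ε : 𝓞 K) : K) - 1)) ^ 2 * ((w : K)) := by
  obtain ⟨w, hw⟩ := hcong
  set π : 𝓞 K := (ε : 𝓞 K) - 1
  have hπ : ((π : 𝓞 K) : K) = (ε : K) - 1 := by simp [π]
  let u : 𝓞 L := algebraMap (𝓞 K) (𝓞 L) x + algebraMap (𝓞 K) (𝓞 L) π * w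
  have hδ : ((δ : 𝓞 L) : L) = 1 + algebraMap K L π * u := by
    have hδO : (δ : 𝓞 L) = 1 + algebraMap (𝓞 K) (𝓞 L) π * u := by linear_combination hw
    rw [hδO]
    rfl
  have htr : Algebra.trace K L u = Module.finrank K L * x + π * Algebra.trace K L w := by
    change Algebra.trace K L (algebraMap K L x + algebraMap K L π * w) = _
    rw [map_add, Algebra.trace_algebraMap, ← Algebra.smul_def, map_smul, smul_eq_mul, nsmul_eq_mul]
  obtain ⟨t, ht⟩ : ∃ t : 𝓞 K, Algebra.trace K L w = t :=
    ⟨⟨_, Algebra.isIntegral_trace w.2⟩, rfl⟩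
  obtain ⟨s, hs⟩ := RingOfIntegers.exists_norm_one_add_mul_eq π u
  refine ⟨t + s, ?_⟩
  rw [← hπ, hδ, hs, htr]
  push_cast
  linear_combination (π : K) ^ 2 * ht
end
end

section
/- Let K be a subfield of ℚ̄, let n be a positive integer, and let 𝔞 be an ideal of O_K. Set M := {u^n : u ∈ U_K and u ≡ 1 (mod 𝔞)}, a multiplicative submonoid of O_K. Then n·R_K ⊆ R_{K,M}, i.e. for every x ∈ R_K we have n·x ∈ R_{K,M}. -/
noncomputable section

/-- The set of units of `O_K`, viewed as a subset of `ℚ̄`. -/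
def unitSet (K : IntermediateField ℚ Qbar) : Set Qbar :=
  {ε | ε ∈ ringOfInt K ∧ ∃ ε' ∈ ringOfInt K, ε * ε' = 1}

/-- `R_K := R_{K, U_K}`. -/
def RK (K : IntermediateField ℚ Qbar) : Set Qbar := RKM K (unitSet K)

lemma rI_one (K : IntermediateField ℚ Qbar) : (1:Qbar) ∈ ringOfInt K :=
  ⟨one_mem K, isIntegral_one⟩

lemma rI_add {K : IntermediateField ℚ Qbar} {a b : Qbar} (ha : a ∈ ringOfInt K)
    (hb : b ∈ ringOfInt K) : a + b ∈ ringOfInt K :=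
  ⟨add_mem ha.1 hb.1, ha.2.add hb.2⟩

lemma rI_mul {K : IntermediateField ℚ Qbar} {a b : Qbar} (ha : a ∈ ringOfInt K)
    (hb : b ∈ ringOfInt K) : a * b ∈ ringOfInt K :=
  ⟨mul_mem ha.1 hb.1, ha.2.mul hb.2⟩

lemma rI_sub {K : IntermediateField ℚ Qbar} {a b : Qbar} (ha : a ∈ ringOfInt K)
    (hb : b ∈ ringOfInt K) : a - b ∈ ringOfInt K :=
  ⟨sub_mem ha.1 hb.1, ha.2.sub hb.2⟩

lemma rI_nat {K : IntermediateField ℚ Qbar} (n : ℕ) : (n:Qbar) ∈ ringOfInt K :=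
  ⟨natCast_mem K n,
    by simpa using isIntegral_algebraMap (R := ℤ) (A := Qbar) (x := (n : ℤ))⟩

lemma rI_pow {K : IntermediateField ℚ Qbar} {a : Qbar} (ha : a ∈ ringOfInt K) (n : ℕ) :
    a ^ n ∈ ringOfInt K := by
  induction n with
  | zero => simpa using rI_one K
  | succ m ih => rw [pow_succ]; exact rI_mul ih ha

/-- `a ^ n = 1 + n (a-1) + (a-1)^2 s` with `s` integral. -/
lemma pow_expand {K : IntermediateField ℚ Qbar} {a : Qbar} (ha : a ∈ ringOfInt K) (n : ℕ) :
    ∃ s ∈ ringOfInt K, a ^ n = 1 + (n : Qbar) * (a - 1) + (a - 1) ^ 2 * s := by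
  induction n with
  | zero => exact ⟨0, ⟨zero_mem K, isIntegral_zero⟩, by ring⟩
  | succ m ih =>
    obtain ⟨s, hs, heq⟩ := ih
    refine ⟨s + (m : Qbar) + (a - 1) * s,
      rI_add (rI_add hs (rI_nat m)) (rI_mul (rI_sub ha (rI_one K)) hs), ?_⟩
    rw [pow_succ, heq]
    push_cast
    ring

theorem stmt4 (K : IntermediateField ℚ Qbar) (n : ℕ) (hn : 0 < n)
    (I : Set Qbar) (hIO : I ⊆ ringOfInt K) (hI0 : (0 : Qbar) ∈ I)
    (hIadd : ∀ a ∈ I, ∀ b ∈ I, a + b ∈ I)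
    (hIsmul : ∀ a ∈ I, ∀ r ∈ ringOfInt K, r * a ∈ I) :
    ∀ x ∈ RK K, (n : Qbar) * x ∈
      RKM K {v | ∃ u ∈ unitSet K, u - 1 ∈ I ∧ v = u ^ n} := by
  intro x hx
  obtain ⟨hxO, hxR⟩ := hx
  refine ⟨rI_mul (rI_nat n) hxO, ?_⟩
  rintro ε ⟨u, hu, huI, rfl⟩
  -- u^n is a unit
  obtain ⟨huO, u', hu'O, huu'⟩ := hu
  have hεU : u ^ n ∈ unitSet K :=
    ⟨rI_pow huO n, u' ^ n, rI_pow hu'O n, by rw [← mul_pow, huu', one_pow]⟩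
  obtain ⟨δ, hδU, w, hwO, hδeq⟩ := hxR (u ^ n) hεU
  have hδO : δ ∈ ringOfInt K := hδU.1
  -- expansions
  obtain ⟨s, hsO, hseq⟩ := pow_expand hδO n
  obtain ⟨t, htO, hteq⟩ := pow_expand huO n
  have hεO : u ^ n ∈ ringOfInt K := rI_pow huO n
  -- δ - 1 ∈ I
  have hδI : δ - 1 ∈ I := by
    have h1 : δ - 1 = (((n : Qbar) + (u - 1) * t) * (x + (u ^ n - 1) * w)) * (u - 1) := by
      rw [hδeq]; linear_combination (x + (u^n-1)*w) * hteq
    rw [h1]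
    exact hIsmul _ huI _
      (rI_mul (rI_add (rI_nat n) (rI_mul (rI_sub huO (rI_one K)) htO))
        (rI_add hxO (rI_mul (rI_sub hεO (rI_one K)) hwO)))
  refine ⟨δ ^ n, ⟨δ, hδU, hδI, rfl⟩,
    (n : Qbar) * w + (x + (u ^ n - 1) * w) ^ 2 * s,
    rI_add (rI_mul (rI_nat n) hwO)
      (rI_mul (rI_pow (rI_add hxO (rI_mul (rI_sub hεO (rI_one K)) hwO)) 2) hsO), ?_⟩
  linear_combination hseq +
    ((n : Qbar) + (δ - 1 + ((u ^ n - 1) * x + (u ^ n - 1) ^ 2 * w)) * s) * hδeq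
end
end

section
/- Let K be an imaginary quadratic field. Then R_K = ℤ + 2·O_K; that is, R_K = {a + 2b : a is the image in O_K of an integer, b ∈ O_K}. -/
/-!
An imaginary quadratic field has a single pair of conjugate complex embeddings, so every unit `ε`
satisfies `ε ^ 2 - t ε + 1 = 0` with `t = 2 Re ε ∈ {-2, …, 2}`.

Taking `ε = -1` in the definition of `R_K` produces a unit `δ ≡ 1 mod 2`; then
`(2 - t) δ = -(δ - 1) ^ 2` forces `4 ∣ 2 - t`, so `δ = ±1` and `x ∈ ℤ + 2 𝓞_K`.

Conversely `ε ^ m - 1 ≡ m (ε - 1) mod (ε - 1) ^ 2`, so `x` passes the test for `ε ≠ 1` as soon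
as it is congruent to an integer modulo `ε - 1`. For `x = a + 2 b` this follows from
`(ε - 1) ^ 2 = (t - 2) ε`: `ε - 1` divides `2` unless `t = -1`, and then `ε - 1` has norm `3`,
so that `𝓞_K ⧸ (ε - 1)` is `ℤ/3`.
-/

noncomputable section

open NumberField

/-- `R_K` for a number field `K`, as a subset of the ring of integers `𝓞 K`. -/
def RKnf (K : Type) [Field K] : Set (𝓞 K) :=
  {x | ∀ ε : (𝓞 K)ˣ, ∃ δ : (𝓞 K)ˣ, ∃ w : 𝓞 K,
    (δ : 𝓞 K) - 1 = ((ε : 𝓞 K) - 1) * x + ((ε : 𝓞 K) - 1) ^ 2 * w}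

open ComplexConjugate

section CommRing

variable {R : Type*} [CommRing R]

theorem Units.sub_one_sq_dvd_zpow_sub_one_sub (ε : Rˣ) (m : ℤ) :
    ((ε : R) - 1) ^ 2 ∣ ((ε ^ m : Rˣ) : R) - 1 - m * ((ε : R) - 1) := by
  induction m using Int.induction_on with
  | zero => simp
  | succ n ih =>
    obtain ⟨c, hc⟩ := ih
    refine ⟨ε * c + n, ?_⟩
    rw [zpow_add_one, Units.val_mul]
    push_cast at hc ⊢
    linear_combination (ε : R) * hc
  | pred n ih =>
    obtain ⟨c, hc⟩ := ih
    refine ⟨(ε⁻¹ : Rˣ) * (c + n + 1), ?_⟩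
    rw [zpow_sub_one, Units.val_mul]
    push_cast at hc ⊢
    linear_combination (ε⁻¹ : Rˣ) * hc + (2 - (ε : R) - ((ε : R) - 1) * n) * ε.mul_inv

theorem Units.exists_sub_one_eq_of_dvd (ε : Rˣ) {x : R} (m : ℤ) (h : (ε : R) - 1 ∣ x - m) :
    ∃ δ : Rˣ, ∃ w : R, (δ : R) - 1 = ((ε : R) - 1) * x + ((ε : R) - 1) ^ 2 * w := by
  obtain ⟨c, hc⟩ := ε.sub_one_sq_dvd_zpow_sub_one_sub m
  obtain ⟨k, hk⟩ := h
  exact ⟨ε ^ m, c - k, by linear_combination hc - ((ε : R) - 1) * hk⟩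

end CommRing

theorem exists_intCast_eq_of_card_prime {A : Type*} [Ring A] {p : ℕ} [hp : Fact p.Prime]
    (h : Nat.card A = p) (a : A) : ∃ m : ℤ, (m : A) = a := by
  have : Finite A := Nat.finite_of_card_ne_zero (h ▸ hp.out.ne_zero)
  have : Nontrivial A := Finite.one_lt_card_iff_nontrivial.mp (h ▸ hp.out.one_lt)
  obtain ⟨m, hm⟩ :=
    AddSubgroup.mem_zmultiples_iff.mp (mem_zmultiples_of_prime_card h one_ne_zero)
  exact ⟨m, by rwa [zsmul_one] at hm⟩

namespace NumberField.RingOfIntegers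

variable {K : Type*} [Field K] [NumberField K]

theorem intCast_dvd_intCast_iff {a b : ℤ} : (a : 𝓞 K) ∣ b ↔ a ∣ b := by
  refine ⟨fun h ↦ ?_, Int.cast_dvd_cast a b⟩
  have hnorm := map_dvd (Algebra.norm ℤ) h
  rw [← eq_intCast (algebraMap ℤ (𝓞 K)) a, ← eq_intCast (algebraMap ℤ (𝓞 K)) b,
    Algebra.norm_algebraMap, Algebra.norm_algebraMap] at hnorm
  exact (Int.pow_dvd_pow_iff Module.finrank_pos.ne').mp hnorm

theorem exists_intCast_sub_dvd_of_natAbs_norm_prime {l : 𝓞 K} {p : ℕ} [Fact p.Prime]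
    (h : (Algebra.norm ℤ l).natAbs = p) (b : 𝓞 K) : ∃ c : ℤ, l ∣ b - c := by
  have hcard : Nat.card (𝓞 K ⧸ Ideal.span {l}) = p := by
    rw [← Submodule.cardQuot_apply, ← Ideal.absNorm_apply, Ideal.absNorm_span_singleton, h]
  obtain ⟨c, hc⟩ := exists_intCast_eq_of_card_prime hcard (Ideal.Quotient.mk _ b)
  refine ⟨c, Ideal.mem_span_singleton.mp (Ideal.Quotient.eq.mp ?_)⟩
  rw [map_intCast, hc]

end NumberField.RingOfIntegers

section ImaginaryQuadratic

variable {K : Type*} [Field K] [NumberField K]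

theorem exists_embedding_trace_norm (hdeg : Module.finrank ℚ K = 2)
    (him : IsEmpty (K →+* ℝ)) :
    ∃ φ : 𝓞 K →+* ℂ, Function.Injective φ ∧ ∀ x : 𝓞 K,
      (Algebra.trace ℤ (𝓞 K) x : ℂ) = φ x + conj (φ x) ∧
      (Algebra.norm ℤ x : ℂ) = φ x * conj (φ x) := by
  classical
  have hcard : Fintype.card (K →ₐ[ℚ] ℂ) = 2 := by rw [AlgHom.card, hdeg]
  obtain ⟨σ⟩ : Nonempty (K →ₐ[ℚ] ℂ) := Fintype.card_pos_iff.mp (by omega)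
  let σ' : K →ₐ[ℚ] ℂ := (Complex.conjAe.toAlgHom.restrictScalars ℚ).comp σ
  have hσ' : σ ≠ σ' := fun h ↦ him.elim <| (ComplexEmbedding.isReal_iff.mpr <|
    RingHom.ext fun x ↦ (DFunLike.congr_fun h x).symm).embedding
  have huniv : (Finset.univ : Finset (K →ₐ[ℚ] ℂ)) = {σ, σ'} :=
    (Finset.eq_of_subset_of_card_le (Finset.subset_univ _)
      (by rw [Finset.card_univ, hcard, Finset.card_pair hσ'])).symm
  refine ⟨σ.toRingHom.comp (algebraMap (𝓞 K) K),
    σ.toRingHom.injective.comp RingOfIntegers.coe_injective, fun x ↦ ⟨?_, ?_⟩⟩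
  · have := trace_eq_sum_embeddings (K := ℚ) ℂ (x := (x : K))
    rw [huniv, Finset.sum_pair hσ', ← Algebra.coe_trace_int] at this
    exact_mod_cast this
  · have := Algebra.norm_eq_prod_embeddings ℚ ℂ (x : K)
    rw [huniv, Finset.prod_pair hσ', ← Algebra.coe_norm_int] at this
    exact_mod_cast this

theorem sq_sub_trace_mul_add_norm_eq_zero (hdeg : Module.finrank ℚ K = 2)
    (him : IsEmpty (K →+* ℝ)) (x : 𝓞 K) :
    x ^ 2 - Algebra.trace ℤ (𝓞 K) x * x + Algebra.norm ℤ x = 0 := by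
  obtain ⟨φ, hφ, h⟩ := exists_embedding_trace_norm hdeg him
  apply hφ
  rw [map_add, map_sub, map_mul, map_pow, map_intCast, map_intCast, (h x).1, (h x).2, map_zero]
  ring

theorem norm_sub_one_eq (hdeg : Module.finrank ℚ K = 2) (him : IsEmpty (K →+* ℝ))
    (x : 𝓞 K) :
    Algebra.norm ℤ (x - 1) = Algebra.norm ℤ x - Algebra.trace ℤ (𝓞 K) x + 1 := by
  obtain ⟨φ, -, h⟩ := exists_embedding_trace_norm hdeg him
  have : (Algebra.norm ℤ (x - 1) : ℂ) =
      Algebra.norm ℤ x - Algebra.trace ℤ (𝓞 K) x + 1 := by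
    rw [(h _).2, (h x).1, (h x).2, map_sub, map_one, map_sub, map_one]
    ring
  exact_mod_cast this

theorem norm_eq_one_of_isUnit (hdeg : Module.finrank ℚ K = 2) (him : IsEmpty (K →+* ℝ))
    {x : 𝓞 K} (hx : IsUnit x) : Algebra.norm ℤ x = 1 := by
  obtain ⟨φ, -, h⟩ := exists_embedding_trace_norm hdeg him
  have hnormSq : (Algebra.norm ℤ x : ℝ) = Complex.normSq (φ x) := by
    exact_mod_cast (h x).2.trans (Complex.mul_conj _)
  have hnonneg : (0 : ℝ) ≤ Algebra.norm ℤ x := hnormSq ▸ Complex.normSq_nonneg _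
  rcases Int.isUnit_iff.mp (hx.map (Algebra.norm ℤ)) with h1 | h1
  · exact h1
  · rw [h1] at hnonneg
    norm_num at hnonneg

theorem abs_trace_le_two_of_isUnit (hdeg : Module.finrank ℚ K = 2) (him : IsEmpty (K →+* ℝ))
    {x : 𝓞 K} (hx : IsUnit x) : |Algebra.trace ℤ (𝓞 K) x| ≤ 2 := by
  obtain ⟨φ, -, h⟩ := exists_embedding_trace_norm hdeg him
  have hnormSq : Complex.normSq (φ x) = 1 := by
    have := (h x).2.trans (Complex.mul_conj _)
    rw [norm_eq_one_of_isUnit hdeg him hx] at this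
    exact_mod_cast this.symm
  have htrace : (Algebra.trace ℤ (𝓞 K) x : ℝ) = 2 * (φ x).re := by
    exact_mod_cast (h x).1.trans (Complex.add_conj _)
  have hsq : (Algebra.trace ℤ (𝓞 K) x : ℝ) ^ 2 ≤ 2 ^ 2 := by
    rw [htrace]
    nlinarith [Complex.re_sq_le_normSq (φ x)]
  exact_mod_cast abs_le_of_sq_le_sq hsq zero_le_two

theorem Units.sq_sub_trace_mul_add_one_eq_zero (hdeg : Module.finrank ℚ K = 2)
    (him : IsEmpty (K →+* ℝ)) (ε : (𝓞 K)ˣ) :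
    (ε : 𝓞 K) ^ 2 - Algebra.trace ℤ (𝓞 K) ε * ε + 1 = 0 := by
  simpa [norm_eq_one_of_isUnit hdeg him ε.isUnit] using
    sq_sub_trace_mul_add_norm_eq_zero hdeg him (ε : 𝓞 K)

theorem Units.eq_one_of_trace_eq_two (hdeg : Module.finrank ℚ K = 2) (him : IsEmpty (K →+* ℝ))
    (ε : (𝓞 K)ˣ) (h : Algebra.trace ℤ (𝓞 K) ε = 2) : (ε : 𝓞 K) = 1 := by
  have hquad := ε.sq_sub_trace_mul_add_one_eq_zero hdeg him
  rw [h, Int.cast_ofNat] at hquad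
  exact sub_eq_zero.mp <| pow_eq_zero_iff two_ne_zero |>.mp <| by linear_combination hquad

theorem Units.eq_neg_one_of_trace_eq_neg_two (hdeg : Module.finrank ℚ K = 2)
    (him : IsEmpty (K →+* ℝ)) (ε : (𝓞 K)ˣ) (h : Algebra.trace ℤ (𝓞 K) ε = -2) :
    (ε : 𝓞 K) = -1 := by
  have hquad := ε.sq_sub_trace_mul_add_one_eq_zero hdeg him
  rw [h] at hquad
  push_cast at hquad
  exact eq_neg_of_add_eq_zero_left <| pow_eq_zero_iff two_ne_zero |>.mp <|
    by linear_combination hquad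

theorem Units.eq_one_or_eq_neg_one_of_two_dvd_sub_one (hdeg : Module.finrank ℚ K = 2)
    (him : IsEmpty (K →+* ℝ)) (δ : (𝓞 K)ˣ) (h : (2 : 𝓞 K) ∣ δ - 1) :
    (δ : 𝓞 K) = 1 ∨ (δ : 𝓞 K) = -1 := by
  obtain ⟨y, hy⟩ := h
  have hquad := δ.sq_sub_trace_mul_add_one_eq_zero hdeg him
  obtain ⟨hlo, hhi⟩ := abs_le.mp (abs_trace_le_two_of_isUnit hdeg him δ.isUnit)
  -- with `t` the trace, `(2 - t) δ = -(δ - 1) ^ 2 = -4 y ^ 2`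
  have h4 : ((4 : ℤ) : 𝓞 K) ∣ ((2 - Algebra.trace ℤ (𝓞 K) δ : ℤ) : 𝓞 K) := by
    refine ⟨-y ^ 2 * (δ⁻¹ : (𝓞 K)ˣ), ?_⟩
    push_cast
    linear_combination (δ⁻¹ : (𝓞 K)ˣ) * hquad - (δ⁻¹ : (𝓞 K)ˣ) * (2 * y + δ - 1) * hy
      - (2 - Algebra.trace ℤ (𝓞 K) δ) * δ.mul_inv
  rw [RingOfIntegers.intCast_dvd_intCast_iff] at h4
  obtain ht | ht : Algebra.trace ℤ (𝓞 K) δ = 2 ∨ Algebra.trace ℤ (𝓞 K) δ = -2 := by omega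
  exacts [Or.inl (δ.eq_one_of_trace_eq_two hdeg him ht),
    Or.inr (δ.eq_neg_one_of_trace_eq_neg_two hdeg him ht)]

theorem Units.exists_int_sub_one_dvd_two_mul_sub (hdeg : Module.finrank ℚ K = 2)
    (him : IsEmpty (K →+* ℝ)) (ε : (𝓞 K)ˣ) (hε : (ε : 𝓞 K) ≠ 1) (b : 𝓞 K) :
    ∃ m : ℤ, (ε : 𝓞 K) - 1 ∣ 2 * b - m := by
  have hsq : ((ε : 𝓞 K) - 1) ^ 2 = (Algebra.trace ℤ (𝓞 K) ε - 2) * ε := by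
    linear_combination ε.sq_sub_trace_mul_add_one_eq_zero hdeg him
  have hnorm := norm_sub_one_eq hdeg him (ε : 𝓞 K)
  rw [norm_eq_one_of_isUnit hdeg him ε.isUnit] at hnorm
  obtain ⟨hlo, hhi⟩ := abs_le.mp (abs_trace_le_two_of_isUnit hdeg him ε.isUnit)
  generalize ht : Algebra.trace ℤ (𝓞 K) ε = t at hsq hnorm hlo hhi
  interval_cases t
  · refine ⟨0, -b, ?_⟩
    rw [ε.eq_neg_one_of_trace_eq_neg_two hdeg him ht]
    push_cast
    ring
  · obtain ⟨c, hc⟩ := RingOfIntegers.exists_intCast_sub_dvd_of_natAbs_norm_prime (p := 3)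
      (by rw [hnorm]; rfl) b
    refine ⟨2 * c, ?_⟩
    push_cast
    rw [← mul_sub]
    exact hc.mul_left 2
  · refine ⟨0, -((ε : 𝓞 K) - 1) * (ε⁻¹ : (𝓞 K)ˣ) * b, ?_⟩
    push_cast at hsq ⊢
    linear_combination (ε⁻¹ : (𝓞 K)ˣ) * b * hsq - 2 * b * ε.mul_inv
  · refine ⟨0, -((ε : 𝓞 K) - 1) * (ε⁻¹ : (𝓞 K)ˣ) * (2 * b), ?_⟩
    push_cast at hsq ⊢
    linear_combination (ε⁻¹ : (𝓞 K)ˣ) * (2 * b) * hsq - 2 * b * ε.mul_inv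
  · exact absurd (ε.eq_one_of_trace_eq_two hdeg him ht) hε

end ImaginaryQuadratic

theorem stmt6 (K : Type) [Field K] [NumberField K]
    (hdeg : Module.finrank ℚ K = 2) (him : IsEmpty (K →+* ℝ)) :
    RKnf K = {z : 𝓞 K | ∃ (a : ℤ) (b : 𝓞 K), z = (a : 𝓞 K) + 2 * b} := by
  ext x
  constructor
  · intro hx
    obtain ⟨δ, w, hδ⟩ := hx (-1)
    push_cast at hδ
    have hsub : (δ : 𝓞 K) - 1 = 2 * (2 * w - x) := by linear_combination hδ
    rcases δ.eq_one_or_eq_neg_one_of_two_dvd_sub_one hdeg him ⟨_, hsub⟩ with h | h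
    · refine ⟨0, w, mul_left_cancel₀ (two_ne_zero' (𝓞 K)) ?_⟩
      rw [h] at hsub
      push_cast
      linear_combination hsub
    · refine ⟨1, w, mul_left_cancel₀ (two_ne_zero' (𝓞 K)) ?_⟩
      rw [h] at hsub
      push_cast
      linear_combination hsub
  · rintro ⟨a, b, rfl⟩ ε
    rcases eq_or_ne (ε : 𝓞 K) 1 with hε | hε
    · exact ⟨1, 0, by simp [hε]⟩
    obtain ⟨m, hm⟩ := ε.exists_int_sub_one_dvd_two_mul_sub hdeg him hε b
    exact ε.exists_sub_one_eq_of_dvd (a + m) (by convert hm using 1; push_cast; ring)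
end
end

section
/- Let K be a number field and let ε be a unit of O_K of infinite multiplicative order. Let a, b ∈ ℤ and d := gcd(a, b). Then: (i) the ideal of O_K generated by ε^a - 1 and ε^b - 1 equals the principal ideal generated by ε^d - 1; and (ii) if a and b are nonzero and (ε^b - 1) divides (ε^a - 1) in O_K, then (ε^b - 1)/(ε^d - 1) is a unit of O_K. -/
/-! Modulo an ideal `I`, the exponents `m` with `u ^ m ≡ 1` are exactly the multiples of the order
of `u` in `(R ⧸ I)ˣ`. Hence `u ^ gcd(a, b) - 1` lies in every ideal containing `u ^ a - 1` and
`u ^ b - 1`, and conversely, so it generates the ideal they span; if `u ^ b - 1 ∣ u ^ a - 1`, that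
ideal is principal on `u ^ b - 1` as well, and in a domain the two generators are associated. -/

open NumberField

namespace Units

variable {R : Type*} [CommRing R]

theorem zpow_sub_one_mem_iff_orderOf_dvd (I : Ideal R) (u : Rˣ) (m : ℤ) :
    ((u ^ m : Rˣ) : R) - 1 ∈ I ↔
      (orderOf (Units.map (Ideal.Quotient.mk I : R →* R ⧸ I) u) : ℤ) ∣ m := by
  rw [orderOf_dvd_iff_zpow_eq_one, ← map_zpow, Units.ext_iff, Units.coe_map, Units.val_one,
    ← map_one (Ideal.Quotient.mk I), MonoidHom.coe_coe, Ideal.Quotient.eq]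

theorem zpow_gcd_sub_one_mem_iff (I : Ideal R) (u : Rˣ) (a b : ℤ) :
    ((u ^ (Int.gcd a b : ℤ) : Rˣ) : R) - 1 ∈ I ↔
      ((u ^ a : Rˣ) : R) - 1 ∈ I ∧ ((u ^ b : Rˣ) : R) - 1 ∈ I := by
  simp only [zpow_sub_one_mem_iff_orderOf_dvd]
  exact ⟨fun h => ⟨h.trans (Int.gcd_dvd_left a b), h.trans (Int.gcd_dvd_right a b)⟩,
    fun ⟨ha, hb⟩ => Int.natCast_dvd_natCast.mpr (Int.dvd_gcd ha hb)⟩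

theorem span_pair_zpow_sub_one (u : Rˣ) (a b : ℤ) :
    Ideal.span {((u ^ a : Rˣ) : R) - 1, ((u ^ b : Rˣ) : R) - 1} =
      Ideal.span {((u ^ (Int.gcd a b : ℤ) : Rˣ) : R) - 1} := by
  have span_le_iff (I : Ideal R) :
      Ideal.span {((u ^ a : Rˣ) : R) - 1, ((u ^ b : Rˣ) : R) - 1} ≤ I ↔
        Ideal.span {((u ^ (Int.gcd a b : ℤ) : Rˣ) : R) - 1} ≤ I := by
    simp only [Ideal.span_le, Set.insert_subset_iff, Set.singleton_subset_iff, SetLike.mem_coe,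
      zpow_gcd_sub_one_mem_iff]
  exact le_antisymm ((span_le_iff _).mpr le_rfl) ((span_le_iff _).mp le_rfl)

theorem associated_zpow_gcd_sub_one_of_dvd [IsDomain R] (u : Rˣ) {a b : ℤ}
    (h : ((u ^ b : Rˣ) : R) - 1 ∣ ((u ^ a : Rˣ) : R) - 1) :
    Associated (((u ^ (Int.gcd a b : ℤ) : Rˣ) : R) - 1) (((u ^ b : Rˣ) : R) - 1) := by
  have hgcd := zpow_gcd_sub_one_mem_iff (Ideal.span {((u ^ (Int.gcd a b : ℤ) : Rˣ) : R) - 1}) u a b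
  have hb := zpow_gcd_sub_one_mem_iff (Ideal.span {((u ^ b : Rˣ) : R) - 1}) u a b
  simp only [Ideal.mem_span_singleton, dvd_rfl, true_iff, and_true] at hgcd hb
  exact associated_of_dvd_dvd hgcd.2 (hb.mpr h)

end Units

theorem stmt7_general (K : Type) [Field K] (ε : (𝓞 K)ˣ) (a b : ℤ) :
    (Ideal.span {((ε ^ a : (𝓞 K)ˣ) : 𝓞 K) - 1, ((ε ^ b : (𝓞 K)ˣ) : 𝓞 K) - 1}
        = Ideal.span {((ε ^ (Int.gcd a b : ℤ) : (𝓞 K)ˣ) : 𝓞 K) - 1}) ∧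
    (a ≠ 0 → b ≠ 0 →
      ((ε ^ b : (𝓞 K)ˣ) : 𝓞 K) - 1 ∣ ((ε ^ a : (𝓞 K)ˣ) : 𝓞 K) - 1 →
      ∃ v : (𝓞 K)ˣ, ((ε ^ b : (𝓞 K)ˣ) : 𝓞 K) - 1
        = (v : 𝓞 K) * (((ε ^ (Int.gcd a b : ℤ) : (𝓞 K)ˣ) : 𝓞 K) - 1)) := by
  refine ⟨ε.span_pair_zpow_sub_one a b, fun _ _ hdvd => ?_⟩
  obtain ⟨v, hv⟩ := ε.associated_zpow_gcd_sub_one_of_dvd hdvd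
  exact ⟨v, by rw [← hv, mul_comm]⟩

theorem stmt7 (K : Type) [Field K] [NumberField K] (ε : (𝓞 K)ˣ)
    (hε : ∀ n : ℕ, 0 < n → ε ^ n ≠ 1) (a b : ℤ) :
    (Ideal.span {((ε ^ a : (𝓞 K)ˣ) : 𝓞 K) - 1, ((ε ^ b : (𝓞 K)ˣ) : 𝓞 K) - 1}
        = Ideal.span {((ε ^ (Int.gcd a b : ℤ) : (𝓞 K)ˣ) : 𝓞 K) - 1}) ∧
    (a ≠ 0 → b ≠ 0 →
      ((ε ^ b : (𝓞 K)ˣ) : 𝓞 K) - 1 ∣ ((ε ^ a : (𝓞 K)ˣ) : 𝓞 K) - 1 →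
      ∃ v : (𝓞 K)ˣ, ((ε ^ b : (𝓞 K)ˣ) : 𝓞 K) - 1
        = (v : 𝓞 K) * (((ε ^ (Int.gcd a b : ℤ) : (𝓞 K)ˣ) : 𝓞 K) - 1)) :=
  stmt7_general K ε a b
end

section
/- Let K be a number field and let W be a subgroup of U_K of rank 1, meaning: W contains an element u of infinite multiplicative order, and for every w ∈ W there exist integers m ≠ 0 and n with w^m = u^n. Then R_{K,W} = ℤ, i.e. R_{K,W} equals the image of ℤ in O_K. -/
/-!
For a prime `p` larger than the number of roots of unity in `K`, some power `ε = u ^ T` is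
`≡ 1 (mod p)`. Given `x ∈ R_{K,W}`, take the `δ` attached to this `ε`. Since
`α ^ m - 1 ≡ m (α - 1) (mod (α - 1) ^ 2)`, every relation `δ ^ m = ε ^ s` forces
`m x ≡ s (mod ε - 1)`, hence modulo `p`. The rank-one hypothesis provides such a relation with
`m ≠ 0`, and as `(𝓞 K)ˣ` has no `p`-torsion, `p` can be divided out of `m`; so `x` is congruent to
an integer modulo every large prime. Then `[K : ℚ] x - Tr x` is divisible by infinitely many
primes, hence zero, and `x` is a rational algebraic integer.
-/

open NumberField

theorem sq_sub_one_dvd_zpow_sub_one_sub {R : Type*} [CommRing R] (α : Rˣ) (m : ℤ) :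
    ((α : R) - 1) ^ 2 ∣ ((α ^ m : Rˣ) : R) - 1 - m * ((α : R) - 1) := by
  induction m using Int.induction_on with
  | zero => simp
  | succ i ih =>
    obtain ⟨c, hc⟩ := ih
    refine ⟨α * c + i, ?_⟩
    rw [zpow_add_one, Units.val_mul]
    push_cast at hc ⊢
    linear_combination (α : R) * hc
  | pred i ih =>
    obtain ⟨c, hc⟩ := ih
    set β : R := ((α⁻¹ : Rˣ) : R)
    have hαβ : (α : R) * β = 1 := α.mul_inv
    refine ⟨β * c + (1 + i) * β, ?_⟩
    rw [zpow_sub_one, Units.val_mul]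
    push_cast at hc ⊢
    linear_combination β * hc + (i + 2 - (1 + i) * (α : R)) * hαβ

theorem sub_one_dvd_mul_sub_of_zpow_eq_zpow {R : Type*} [CommRing R] [IsDomain R] {ε δ : Rˣ}
    {x : R} (hε : ε ≠ 1) (hδ : ((ε : R) - 1) ^ 2 ∣ (δ : R) - 1 - ((ε : R) - 1) * x) {m s : ℤ}
    (h : δ ^ m = ε ^ s) : (ε : R) - 1 ∣ m * x - s := by
  have hε₀ : (ε : R) - 1 ≠ 0 := sub_ne_zero.2 (Units.val_eq_one.not.2 hε)
  have hεδ : (ε : R) - 1 ∣ (δ : R) - 1 :=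
    (dvd_sub_left (dvd_mul_right _ x)).1 ((dvd_pow_self _ two_ne_zero).trans hδ)
  have key : ((ε : R) - 1) * (m * x - s) = (((ε ^ s : Rˣ) : R) - 1 - s * ((ε : R) - 1))
      - (((δ ^ m : Rˣ) : R) - 1 - m * ((δ : R) - 1)) - m * ((δ : R) - 1 - ((ε : R) - 1) * x) := by
    rw [h]; ring
  rw [← mul_dvd_mul_iff_left hε₀, ← sq, key]
  exact dvd_sub (dvd_sub (sq_sub_one_dvd_zpow_sub_one_sub ε s)
    ((pow_dvd_pow_of_dvd hεδ 2).trans (sq_sub_one_dvd_zpow_sub_one_sub δ m)))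
    (dvd_mul_of_dvd_right hδ _)

theorem exists_zpow_eq_zpow_not_dvd {G : Type*} [CommGroup G] {p : ℕ} (hp : 1 < p)
    (htors : ∀ t : G, t ^ p = 1 → t = 1) {a b : G}
    (hdvd : ∀ m s : ℤ, a ^ m = b ^ s → (p : ℤ) ∣ m → (p : ℤ) ∣ s) {m s : ℤ} (hm : m ≠ 0)
    (h : a ^ m = b ^ s) : ∃ m' s' : ℤ, ¬ (p : ℤ) ∣ m' ∧ a ^ m' = b ^ s' := by
  induction hN : m.natAbs using Nat.strong_induction_on generalizing m s with
  | _ N ih =>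
    by_cases hpm : (p : ℤ) ∣ m
    · obtain ⟨s₁, rfl⟩ := hdvd m s h hpm
      obtain ⟨m₁, rfl⟩ := hpm
      have h₁ : a ^ m₁ = b ^ s₁ := by
        refine div_eq_one.1 (htors _ ?_)
        rw [div_pow, ← zpow_natCast, ← zpow_natCast, ← zpow_mul, ← zpow_mul, mul_comm, h,
          mul_comm, div_self']
      refine ih _ ?_ (right_ne_zero_of_mul hm) h₁ rfl
      rw [← hN, Int.natAbs_mul, Int.natAbs_natCast]
      exact lt_mul_left (Int.natAbs_pos.2 (right_ne_zero_of_mul hm)) hp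
    · exact ⟨m, s, hpm, h⟩

theorem exists_intCast_dvd_sub_of_isCoprime {R : Type*} [CommRing R] {x : R} {m s n : ℤ}
    (hmn : IsCoprime m n) (h : (n : R) ∣ m * x - s) : ∃ c : ℤ, (n : R) ∣ x - c := by
  obtain ⟨a, b, hab⟩ := hmn
  have hab' := congrArg (Int.cast : ℤ → R) hab
  push_cast at hab'
  refine ⟨a * s, ?_⟩
  have hx : x - ((a * s : ℤ) : R) = a * (m * x - s) + n * (b * x) := by
    push_cast; linear_combination (-x) * hab'
  rw [hx]
  exact dvd_add (dvd_mul_of_dvd_right h _) (dvd_mul_right _ _)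

theorem intCast_dvd_intCast_iff {R : Type*} [CommRing R] [Nontrivial R] [Module.Free ℤ R]
    [Module.Finite ℤ R] {a b : ℤ} : (a : R) ∣ (b : R) ↔ a ∣ b := by
  refine ⟨fun h => ?_, Int.cast_dvd_cast a b⟩
  have := map_dvd (Algebra.norm ℤ) h
  rw [← eq_intCast (algebraMap ℤ R), ← eq_intCast (algebraMap ℤ R), Algebra.norm_algebraMap,
    Algebra.norm_algebraMap] at this
  exact (Int.pow_dvd_pow_iff Module.finrank_pos.ne').1 this

theorem eq_zero_of_forall_prime_dvd {R : Type*} [CommRing R] [Module.Free ℤ R] {z : R} (N : ℕ)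
    (h : ∀ p : ℕ, p.Prime → N < p → (p : R) ∣ z) : z = 0 := by
  let B := Module.Free.chooseBasis ℤ R
  refine B.repr.injective (Finsupp.ext fun i => ?_)
  obtain ⟨p, hpN, hp⟩ := Nat.exists_infinite_primes (max N (B.repr z i).natAbs + 1)
  have hpz : (p : ℤ) ∣ B.repr z i := by
    obtain ⟨y, hy⟩ := h p hp (by omega)
    exact ⟨B.repr y i, by rw [hy, ← nsmul_eq_mul, map_nsmul, Finsupp.smul_apply, nsmul_eq_mul]⟩
  rw [map_zero, Finsupp.zero_apply]
  exact Int.eq_zero_of_dvd_of_natAbs_lt_natAbs hpz (by rw [Int.natAbs_natCast]; omega)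

theorem exists_intCast_eq_of_forall_prime_dvd_sub {R : Type*} [CommRing R] [Nontrivial R]
    [Module.Free ℤ R] [Module.Finite ℤ R] {x : R} (N : ℕ)
    (h : ∀ p : ℕ, p.Prime → N < p → ∃ c : ℤ, (p : R) ∣ x - c) : ∃ c : ℤ, (c : R) = x := by
  set d := Module.finrank ℤ R
  have hdx : (d : R) * x = (Algebra.trace ℤ R x : R) := by
    refine sub_eq_zero.1 (eq_zero_of_forall_prime_dvd N fun p hp hpN => ?_)
    obtain ⟨c, y, hy⟩ := h p hp hpN
    have hxy : x = algebraMap ℤ R c + p • y := by rw [nsmul_eq_mul, ← hy]; simp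
    refine ⟨d * y - Algebra.trace ℤ R y, ?_⟩
    rw [hxy, map_add, map_nsmul, Algebra.trace_algebraMap, eq_intCast]
    push_cast [nsmul_eq_mul]
    ring
  obtain ⟨c, hc⟩ := (intCast_dvd_intCast_iff (a := d) (b := Algebra.trace ℤ R x)).1
    ⟨x, by push_cast; exact hdx.symm⟩
  have hd : (d : ℤ) ≠ 0 := Int.natCast_ne_zero.2 Module.finrank_pos.ne'
  refine ⟨c, smul_right_injective R hd ?_⟩
  simp only [zsmul_eq_mul, Int.cast_natCast, hdx, hc]
  push_cast
  ring

theorem Ideal.exists_pow_sub_one_mem {R : Type*} [CommRing R] (I : Ideal R) [Finite (R ⧸ I)]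
    (u : Rˣ) : ∃ T : ℕ, 0 < T ∧ ((u ^ T : Rˣ) : R) - 1 ∈ I := by
  obtain ⟨T, hT, h⟩ := isOfFinOrder_iff_pow_eq_one.1
    (isOfFinOrder_of_finite (Units.map (Ideal.Quotient.mk I : R →* R ⧸ I) u))
  refine ⟨T, hT, Ideal.Quotient.eq.1 ?_⟩
  simpa [← map_pow, Units.ext_iff] using h

theorem NumberField.Units.eq_one_of_pow_eq_one {K : Type*} [Field K] [NumberField K] {p : ℕ}
    (hp : p.Prime) (hpK : torsionOrder K < p) {t : (𝓞 K)ˣ} (ht : t ^ p = 1) : t = 1 := by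
  have hcop : Nat.Coprime (⟨p, hp.pos⟩ : ℕ+) (torsionOrder K) :=
    (Nat.Prime.coprime_iff_not_dvd hp).2 (Nat.not_dvd_of_pos_of_lt (torsionOrder_pos K) hpK)
  exact (rootsOfUnity_eq_one K hcop).1 (by simpa [mem_rootsOfUnity] using ht)

/-- The set `R_{K,M}` of the paper, for `M = W`. -/
def congruenceMultipliers {R : Type*} [CommRing R] (W : Subgroup Rˣ) : Set R :=
  {x | ∀ ε ∈ W, ∃ δ ∈ W, ∃ v : R, (δ : R) - 1 = ((ε : R) - 1) * x + ((ε : R) - 1) ^ 2 * v}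

theorem intCast_mem_congruenceMultipliers {R : Type*} [CommRing R] (W : Subgroup Rˣ) (c : ℤ) :
    (c : R) ∈ congruenceMultipliers W := by
  intro ε hε
  obtain ⟨v, hv⟩ := sq_sub_one_dvd_zpow_sub_one_sub ε c
  exact ⟨ε ^ c, zpow_mem hε c, v, by linear_combination hv⟩

theorem exists_intCast_dvd_sub_of_mem_congruenceMultipliers {R : Type*} [CommRing R] [IsDomain R]
    [Module.Free ℤ R] [Module.Finite ℤ R] {W : Subgroup Rˣ} {x : R}
    (hx : x ∈ congruenceMultipliers W) {u : Rˣ} (huW : u ∈ W) (hu : ∀ k : ℕ, 0 < k → u ^ k ≠ 1)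
    (hW : ∀ w ∈ W, ∃ m n : ℤ, m ≠ 0 ∧ w ^ m = u ^ n) {p : ℕ} (hp : p.Prime)
    (htors : ∀ t : Rˣ, t ^ p = 1 → t = 1) : ∃ c : ℤ, (p : R) ∣ x - c := by
  have hp₀ : (p : R) ≠ 0 := by
    simpa using smul_ne_zero (M := R) (Int.natCast_ne_zero.2 hp.ne_zero) one_ne_zero
  have : Finite (R ⧸ Ideal.span {(p : R)}) :=
    Ideal.finiteQuotientOfFreeOfNeBot _ (by rwa [Ne, Ideal.span_singleton_eq_bot])
  obtain ⟨T, hT, hpε⟩ := (Ideal.span {(p : R)}).exists_pow_sub_one_mem u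
  rw [Ideal.mem_span_singleton, ← Int.cast_natCast] at hpε
  obtain ⟨δ, hδW, v, hv⟩ := hx (u ^ T) (pow_mem huW T)
  obtain ⟨m, n, hm, hδu⟩ := hW δ hδW
  have hcong : ∀ m' s' : ℤ, δ ^ m' = (u ^ T) ^ s' → ((p : ℤ) : R) ∣ m' * x - s' := fun m' s' h =>
    hpε.trans <| sub_one_dvd_mul_sub_of_zpow_eq_zpow (hu T hT) ⟨v, by rw [hv]; ring⟩ h
  have hdvd : ∀ m' s' : ℤ, δ ^ m' = (u ^ T) ^ s' → (p : ℤ) ∣ m' → (p : ℤ) ∣ s' := by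
    rintro m' s' h ⟨k, rfl⟩
    refine intCast_dvd_intCast_iff.1 ((dvd_sub_right ?_).1 (hcong _ s' h))
    exact ⟨k * x, by push_cast; ring⟩
  obtain ⟨m', s', hpm', h'⟩ := exists_zpow_eq_zpow_not_dvd hp.one_lt htors hdvd
    (mul_ne_zero hm (Int.natCast_ne_zero.2 hT.ne'))
    (by rw [zpow_mul, hδu, ← zpow_natCast, ← zpow_mul, ← zpow_mul, mul_comm])
  obtain ⟨c, hc⟩ := exists_intCast_dvd_sub_of_isCoprime
    ((Prime.coprime_iff_not_dvd (Nat.prime_iff_prime_int.1 hp)).2 hpm').symm (hcong m' s' h')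
  exact ⟨c, by exact_mod_cast hc⟩

theorem stmt9 (K : Type) [Field K] [NumberField K] (W : Subgroup (𝓞 K)ˣ)
    (hrank : ∃ u ∈ W, (∀ k : ℕ, 0 < k → u ^ k ≠ 1) ∧
      ∀ w ∈ W, ∃ (m n : ℤ), m ≠ 0 ∧ w ^ m = u ^ n) :
    {x : 𝓞 K | ∀ ε ∈ W, ∃ δ ∈ W, ∃ v : 𝓞 K,
        ((δ : (𝓞 K)ˣ) : 𝓞 K) - 1
          = (((ε : (𝓞 K)ˣ) : 𝓞 K) - 1) * x + (((ε : (𝓞 K)ˣ) : 𝓞 K) - 1) ^ 2 * v}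
      = Set.range (Int.cast : ℤ → 𝓞 K) := by
  obtain ⟨u, huW, hu, hW⟩ := hrank
  show congruenceMultipliers W = _
  refine subset_antisymm (fun x hx => ?_)
    (Set.range_subset_iff.2 (intCast_mem_congruenceMultipliers W))
  exact exists_intCast_eq_of_forall_prime_dvd_sub (Units.torsionOrder K) fun p hp hpK =>
    exists_intCast_dvd_sub_of_mem_congruenceMultipliers hx huW hu hW hp fun _ =>
      Units.eq_one_of_pow_eq_one hp hpK
end

section
/- Let p be a rational prime, K a number field, and j a positive integer. Suppose ε is a unit of O_K with ε ≠ 1 and ε ≡ 1 (mod p^{j+1}·O_K). Then there exists x ∈ O_K such that for every integer n coprime to p, there is no unit δ of O_K satisfying (ε - 1)·p^j·n·x ≡ δ - 1 (mod p^{j+1}·(ε - 1)·O_K). -/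
/-!
Suppose no such `x` exists and put `g = p ^ j (ε - 1)`. Then every class of `𝓞 K ⧸ (p)` is, up to
a factor prime to `p`, of the form `(δ - 1) / g` for a unit `δ ≡ 1 mod g`. Since `p ∣ g`, the map
`δ ↦ (δ - 1) / g mod p` is a homomorphism from the group `U` of these units, which is therefore
onto `𝓞 K ⧸ (p)`. Since `p ^ 2 ∣ g`, `U` has no torsion, so by Dirichlet's unit theorem it is free
of rank at most `r₁ + r₂ - 1 < [K : ℚ]`, whence `p ^ [K : ℚ] = #(𝓞 K ⧸ (p)) ≤ p ^ rank U`.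
-/

open Module NumberField

theorem algebraMap_dvd_algebraMap_iff {A B : Type*} [CommRing A] [CommRing B] [Algebra A B]
    [FaithfullyFlat A B] {a b : A} : algebraMap A B a ∣ algebraMap A B b ↔ a ∣ b := by
  refine ⟨fun h => ?_, map_dvd _⟩
  have hb : b ∈ ((Ideal.span {a}).map (algebraMap A B)).comap (algebraMap A B) := by
    rw [Ideal.mem_comap, Ideal.map_span, Set.image_singleton]
    exact Ideal.mem_span_singleton.mpr h
  rwa [Ideal.comap_map_eq_self_of_faithfullyFlat, Ideal.mem_span_singleton] at hb

theorem natCast_dvd_natCast_of_faithfullyFlat {R : Type*} [CommRing R] [FaithfullyFlat ℤ R]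
    {m n : ℕ} : (m : R) ∣ (n : R) ↔ m ∣ n := by
  rw [← map_natCast (algebraMap ℤ R), ← map_natCast (algebraMap ℤ R) n,
    algebraMap_dvd_algebraMap_iff, Int.natCast_dvd_natCast]

theorem Units.eq_one_of_isOfFinOrder_of_sq_dvd_sub_one {R : Type*} [CommRing R] [IsDomain R]
    [FaithfullyFlat ℤ R] {p : ℕ} (hp : p.Prime) {ζ : Rˣ} (hζ : IsOfFinOrder ζ)
    (hp2 : (p : R) ^ 2 ∣ (ζ : R) - 1) : ζ = 1 := by
  by_contra hne
  have sub_one_dvd_order (η : Rˣ) (hη : η ≠ 1) : (η : R) - 1 ∣ (orderOf η : R) :=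
    sub_one_dvd_natCast_of_pow_eq_one
      (by rw [← Units.val_pow_eq_pow_val, pow_orderOf_eq_one, Units.val_one]) (by simpa using hη)
  have hpt : p ∣ orderOf ζ := natCast_dvd_natCast_of_faithfullyFlat.mp
    (((dvd_pow_self _ two_ne_zero).trans hp2).trans (sub_one_dvd_order ζ hne))
  -- `ζ' := ζ ^ (orderOf ζ / p)` has order `p`, so `ζ' - 1 ∣ p`, while `p ^ 2 ∣ ζ - 1 ∣ ζ' - 1`.
  set ζ' := ζ ^ (orderOf ζ / p)
  have hord : orderOf ζ' = p := orderOf_pow_orderOf_div hζ.orderOf_pos.ne' hpt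
  have hζ' : ζ' ≠ 1 := fun h => hp.one_lt.ne' (by rw [← hord, h, orderOf_one])
  have hdvd : (ζ : R) - 1 ∣ (ζ' : R) - 1 := by
    simpa [ζ'] using sub_one_dvd_pow_sub_one (ζ : R) (orderOf ζ / p)
  have hpp : ((p ^ 2 : ℕ) : R) ∣ (p : R) := by
    push_cast
    simpa [hord] using hp2.trans (hdvd.trans (sub_one_dvd_order ζ' hζ'))
  have := Nat.le_of_dvd hp.pos (natCast_dvd_natCast_of_faithfullyFlat.mp hpp)
  nlinarith [hp.two_le]

namespace Ideal

variable {R : Type*} [CommRing R]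

def principalUnits (I : Ideal R) : Subgroup Rˣ :=
  (Units.map (Ideal.Quotient.mk I).toMonoidHom).ker

theorem mem_principalUnits {I : Ideal R} {u : Rˣ} : u ∈ I.principalUnits ↔ (u : R) - 1 ∈ I := by
  rw [principalUnits, MonoidHom.mem_ker, Units.ext_iff, Units.coe_map, Units.val_one,
    ← Quotient.mk_eq_mk_iff_sub_mem]
  rfl

theorem isMulTorsionFree_principalUnits [IsDomain R] [FaithfullyFlat ℤ R] {p : ℕ} (hp : p.Prime)
    {I : Ideal R} (hI : I ≤ span {(p : R) ^ 2}) : IsMulTorsionFree I.principalUnits := by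
  refine IsMulTorsionFree.of_not_isOfFinOrder fun u hu hfin => hu ?_
  exact Subtype.ext <| Units.eq_one_of_isOfFinOrder_of_sq_dvd_sub_one hp
    (I.principalUnits.subtype.isOfFinOrder hfin)
    (mem_span_singleton.mp (hI (mem_principalUnits.mp u.2)))

section Hom

variable {g : R}

noncomputable def subOneDiv (u : (span {g}).principalUnits) : R :=
  (mem_span_singleton.mp (mem_principalUnits.mp u.2)).choose

theorem sub_one_eq_mul_subOneDiv (u : (span {g}).principalUnits) :
    ((u : Rˣ) : R) - 1 = g * subOneDiv u :=
  (mem_span_singleton.mp (mem_principalUnits.mp u.2)).choose_spec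

variable [IsDomain R] (hg : g ≠ 0) {J : Ideal R}
include hg

theorem subOneDiv_eq {u : (span {g}).principalUnits} {w : R} (h : ((u : Rˣ) : R) - 1 = g * w) :
    subOneDiv u = w :=
  mul_left_cancel₀ hg ((sub_one_eq_mul_subOneDiv u).symm.trans h)

/-- `u ↦ (u - 1) / g mod J`, additive because `g ∈ J` and
`(uv - 1) / g = (u - 1) / g + (v - 1) / g + g · ((u - 1) / g) · ((v - 1) / g)`. -/
noncomputable def principalUnitsHom (hgJ : g ∈ J) : Additive (span {g}).principalUnits →+ R ⧸ J :=
  AddMonoidHom.mk' (fun u => Quotient.mk J (subOneDiv u.toMul)) fun u v => by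
    have hsum : subOneDiv (u + v).toMul =
        subOneDiv u.toMul + subOneDiv v.toMul + g * (subOneDiv u.toMul * subOneDiv v.toMul) := by
      refine subOneDiv_eq hg ?_
      have hu := sub_one_eq_mul_subOneDiv u.toMul
      have hv := sub_one_eq_mul_subOneDiv v.toMul
      simp only [toMul_add, Subgroup.coe_mul, Units.val_mul]
      linear_combination ((v.toMul : Rˣ) : R) * hu + (1 + g * subOneDiv u.toMul) * hv
    simp only [hsum, map_add, Quotient.eq_zero_iff_mem.mpr (mul_mem_right _ J hgJ), add_zero]

theorem principalUnitsHom_apply_of_sub_one_eq (hgJ : g ∈ J) {u : (span {g}).principalUnits}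
    {w : R} (h : ((u : Rˣ) : R) - 1 = g * w) :
    principalUnitsHom hg hgJ (Additive.ofMul u) = Quotient.mk J w := by
  simp [principalUnitsHom, subOneDiv_eq hg h]

theorem mk_mem_range_principalUnitsHom (hgJ : g ∈ J) {a y : R} (ha : a ∈ J) {δ : Rˣ}
    (h : g * y - ((δ : R) - 1) ∈ span {a * g}) :
    Quotient.mk J y ∈ (principalUnitsHom hg hgJ).range := by
  obtain ⟨s, hs⟩ := mem_span_singleton.mp h
  have hδ : (δ : R) - 1 = g * (y - a * s) := by linear_combination -hs
  have hδU : δ ∈ (span {g}).principalUnits :=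
    mem_principalUnits.mpr (mem_span_singleton.mpr ⟨_, hδ⟩)
  refine ⟨Additive.ofMul ⟨δ, hδU⟩, ?_⟩
  rw [principalUnitsHom_apply_of_sub_one_eq hg hgJ hδ, map_sub,
    Quotient.eq_zero_iff_mem.mpr (mul_mem_right s J ha), sub_zero]

end Hom

theorem card_quotient_span_natCast {S : Type*} [CommRing S] [IsDedekindDomain S] [Module.Free ℤ S]
    [Module.Finite ℤ S] (n : ℕ) : Nat.card (S ⧸ span {(n : S)}) = n ^ finrank ℤ S := by
  rw [← Submodule.cardQuot_apply, ← absNorm_apply, absNorm_span_natCast]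

theorem Quotient.nsmul_eq_zero_of_span_natCast (n : ℕ) (v : R ⧸ span {(n : R)}) : n • v = 0 := by
  obtain ⟨x, rfl⟩ := Quotient.mk_surjective v
  rw [nsmul_eq_mul, ← map_natCast (Quotient.mk _), ← map_mul, Quotient.eq_zero_iff_mem]
  exact mul_mem_right _ _ (mem_span_singleton_self _)

end Ideal

section Counting

variable {A V : Type*} [AddCommGroup A] [AddCommGroup V] {p : ℕ}

theorem AddMonoidHom.surjective_of_forall_isCoprime_zsmul_mem_range (hV : ∀ v : V, p • v = 0)
    (f : A →+ V) (h : ∀ v, ∃ n : ℤ, IsCoprime n p ∧ n • v ∈ f.range) : Function.Surjective f := by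
  intro v
  obtain ⟨n, ⟨a, b, hab⟩, y, hy⟩ := h v
  refine ⟨a • y, ?_⟩
  calc f (a • y) = (a * n + b * p) • v - b • (p • v) := by
        rw [map_zsmul, hy, add_smul, mul_smul, mul_smul, natCast_zsmul]; abel
    _ = v := by rw [hab, hV, one_smul, smul_zero, sub_zero]

theorem Nat.card_le_pow_finrank_of_surjective [NeZero p] [Module.Free ℤ A] [Module.Finite ℤ A]
    (hV : ∀ v : V, p • v = 0) (f : A →+ V) (hf : Function.Surjective f) :
    Nat.card V ≤ p ^ finrank ℤ A := by
  let _ : Module (ZMod p) V := AddCommGroup.zmodModule hV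
  let b := Module.finBasis ℤ A
  have hspan : Function.Surjective fun c : Fin (finrank ℤ A) → ZMod p => ∑ i, c i • f (b i) := by
    intro v
    obtain ⟨y, rfl⟩ := hf v
    refine ⟨fun i => (b.repr y i : ZMod p), ?_⟩
    simp only [Int.cast_smul_eq_zsmul, ← map_zsmul, ← map_sum, b.sum_repr]
  simpa using Nat.card_le_card_of_surjective _ hspan

end Counting

namespace NumberField.Units

variable {K : Type*} [Field K] [NumberField K]

theorem rank_lt_finrank : rank K < finrank ℚ K := by
  have := InfinitePlace.card_eq_nrRealPlaces_add_nrComplexPlaces K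
  have := InfinitePlace.card_add_two_mul_card_eq_rank K
  have : 0 < finrank ℚ K := finrank_pos
  unfold rank
  omega

instance (H : Subgroup (𝓞 K)ˣ) : Module.Finite ℤ (Additive H) :=
  Module.Finite.of_injective H.subtype.toAdditive.toIntLinearMap Subtype.val_injective

theorem finrank_subgroup_le (H : Subgroup (𝓞 K)ˣ) : finrank ℤ (Additive H) ≤ rank K :=
  finrank_eq K ▸ LinearMap.finrank_le_finrank_of_injective
    (f := H.subtype.toAdditive.toIntLinearMap) Subtype.val_injective

end NumberField.Units

theorem stmt10 (p : ℕ) (hp : p.Prime) (K : Type) [Field K] [NumberField K]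
    (j : ℕ) (hj : 0 < j) (ε : (𝓞 K)ˣ) (hε1 : (ε : 𝓞 K) ≠ 1)
    (hεcong : (ε : 𝓞 K) - 1 ∈ Ideal.span {(p : 𝓞 K) ^ (j + 1)}) :
    ∃ x : 𝓞 K, ∀ n : ℤ, IsCoprime n (p : ℤ) →
      ¬ ∃ δ : (𝓞 K)ˣ,
          ((ε : 𝓞 K) - 1) * (p : 𝓞 K) ^ j * (n : 𝓞 K) * x - ((δ : 𝓞 K) - 1)
            ∈ Ideal.span {(p : 𝓞 K) ^ (j + 1) * ((ε : 𝓞 K) - 1)} := by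
  by_contra! hcon
  set g : 𝓞 K := (p : 𝓞 K) ^ j * ((ε : 𝓞 K) - 1)
  have hg : g ≠ 0 :=
    mul_ne_zero (pow_ne_zero _ (Nat.cast_ne_zero.mpr hp.ne_zero)) (sub_ne_zero.mpr hε1)
  have hp2g : (p : 𝓞 K) ^ 2 ∣ g := by
    rw [sq]
    exact mul_dvd_mul (dvd_pow_self _ hj.ne') ((dvd_pow_self _ j.succ_ne_zero).trans
      (Ideal.mem_span_singleton.mp hεcong))
  have hgp : g ∈ Ideal.span {(p : 𝓞 K)} :=
    Ideal.mem_span_singleton.mpr ((dvd_pow_self _ two_ne_zero).trans hp2g)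
  have hφ : Function.Surjective (Ideal.principalUnitsHom hg hgp) := by
    refine AddMonoidHom.surjective_of_forall_isCoprime_zsmul_mem_range
      (Ideal.Quotient.nsmul_eq_zero_of_span_natCast p) _ fun v => ?_
    obtain ⟨x, rfl⟩ := Ideal.Quotient.mk_surjective v
    obtain ⟨n, hn, δ, hδ⟩ := hcon x
    have hg_mul : ((ε : 𝓞 K) - 1) * (p : 𝓞 K) ^ j * (n : 𝓞 K) * x = g * (n * x) := by ring
    have hpg : (p : 𝓞 K) ^ (j + 1) * ((ε : 𝓞 K) - 1) = p * g := by ring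
    rw [hg_mul, hpg] at hδ
    refine ⟨n, hn, ?_⟩
    simpa [zsmul_eq_mul] using Ideal.mk_mem_range_principalUnitsHom hg hgp
      (Ideal.mem_span_singleton_self _) hδ
  have := Ideal.isMulTorsionFree_principalUnits hp
    (Ideal.span_singleton_le_span_singleton.mpr hp2g)
  have : NeZero p := ⟨hp.ne_zero⟩
  have hcard := Nat.card_le_pow_finrank_of_surjective
    (Ideal.Quotient.nsmul_eq_zero_of_span_natCast p) _ hφ
  rw [Ideal.card_quotient_span_natCast, RingOfIntegers.rank] at hcard
  exact hcard.not_gt (Nat.pow_lt_pow_right hp.one_lt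
    ((Units.finrank_subgroup_le _).trans_lt Units.rank_lt_finrank))
end

section
/- Let K be a number field, I an ideal of O_K, and β ∈ O_K relatively prime to I (i.e. the ideal generated by β together with I is all of O_K). Then there exist a positive integer d, elements a, b ∈ O_K, a root ρ ∈ ℚ̄ of the polynomial X^d + a·X^{d-1} + b, and a unit δ of O_L, where L := K(ρ) is the finite extension of K generated by ρ, such that δ ≡ β (mod I·O_L). -/
/-!
Write `1 = xβ + c` with `c ∈ I`. Then `β` is a unit modulo `c`, so `β ^ (e + 1) ≡ 1 (mod c)` for
some odd `e`, and coprimality of `β ^ e` and `c ^ e` turns this into an identity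
`(-β) ^ (e + 1) + a c (-β) ^ e + b c ^ (e + 1) = 1` in `𝓞 K`. The left side is the value at `-β` of
`c ^ (e + 1) f (X / c)` for `f = X ^ (e + 1) + a X ^ e + b`, which vanishes at `c ρ` for a root `ρ`
of `f`; hence `c ρ + β` divides `1`, and `δ = β + c ρ` is a unit congruent to `β` modulo `I`.
-/

open NumberField Polynomial

theorem Polynomial.isUnit_sub_of_eval_eq_zero {R : Type*} [CommRing R] {p : R[X]} {x y : R}
    (hx : p.eval x = 0) (hy : IsUnit (p.eval y)) : IsUnit (x - y) :=
  isUnit_of_dvd_unit (by simpa [hx] using sub_dvd_eval_sub x y p) hy.neg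

theorem isUnit_mul_add_of_root {S : Type*} [CommRing S] {a b c r y : S} {e : ℕ}
    (hr : r ^ (e + 1) + a * r ^ e + b = 0)
    (hy : IsUnit ((-y) ^ (e + 1) + a * c * (-y) ^ e + b * c ^ (e + 1))) :
    IsUnit (c * r + y) := by
  set p : S[X] := X ^ (e + 1) + C (a * c) * X ^ e + C (b * c ^ (e + 1))
  have hp : p.eval (c * r) = 0 := by
    simp only [p, eval_add, eval_mul, eval_pow, eval_X, eval_C]
    linear_combination c ^ (e + 1) * hr
  have hpy : IsUnit (p.eval (-y)) := by simpa [p] using hy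
  simpa only [sub_neg_eq_add] using isUnit_sub_of_eval_eq_zero hp hpy

theorem IsCoprime.exists_dvd_pow_sub_one {R : Type*} [CommRing R] {β c : R}
    [Finite (R ⧸ Ideal.span {c})] (h : IsCoprime β c) : ∃ n, 0 < n ∧ c ∣ β ^ n - 1 := by
  have hu : IsUnit (Ideal.Quotient.mk (Ideal.span {c}) β) := by
    obtain ⟨u, v, huv⟩ := h
    refine .of_mul_eq_one (Ideal.Quotient.mk _ u) ?_
    rw [← map_mul, ← map_one (Ideal.Quotient.mk _), Ideal.Quotient.mk_eq_mk_iff_sub_mem,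
      Ideal.mem_span_singleton']
    exact ⟨-v, by linear_combination -huv⟩
  obtain ⟨n, hn, hpow⟩ := (isOfFinOrder_of_finite hu.unit).exists_pow_eq_one
  refine ⟨n, hn, Ideal.mem_span_singleton.mp ?_⟩
  rw [← Ideal.Quotient.mk_eq_mk_iff_sub_mem, map_pow, map_one, ← hu.unit_spec,
    ← Units.val_pow_eq_pow_val, hpow, Units.val_one]

theorem IsCoprime.exists_pow_succ_add_eq_one {R : Type*} [CommRing R] {y c : R} {e : ℕ}
    (h : IsCoprime y c) (hdvd : c ∣ y ^ (e + 1) - 1) :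
    ∃ a b : R, y ^ (e + 1) + a * c * y ^ e + b * c ^ (e + 1) = 1 := by
  obtain ⟨m, hm⟩ := hdvd
  obtain ⟨u, v, huv⟩ := h.pow (m := e) (n := e)
  exact ⟨-(m * u), -(m * v), by linear_combination hm - c * m * huv⟩

theorem NumberField.RingOfIntegers.exists_isUnit_pow_succ_add {K : Type*} [Field K]
    [NumberField K] {β c : 𝓞 K} (h : IsCoprime β c) :
    ∃ (e : ℕ) (a b : 𝓞 K), IsUnit ((-β) ^ (e + 1) + a * c * (-β) ^ e + b * c ^ (e + 1)) := by
  rcases eq_or_ne c 0 with rfl | hc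
  · exact ⟨0, 0, 0, by simpa using isCoprime_zero_right.mp h⟩
  have : Finite (𝓞 K ⧸ Ideal.span {c}) :=
    Ideal.finiteQuotientOfFreeOfNeBot _ (by simpa using hc)
  obtain ⟨n, hn, hdvd⟩ := h.exists_dvd_pow_sub_one
  obtain ⟨m, rfl⟩ : ∃ m, n = m + 1 := ⟨n - 1, by omega⟩
  -- an even exponent absorbs the sign of `-β`
  have hdvd' : c ∣ (-β) ^ (2 * m + 1 + 1) - 1 := by
    have : (-β) ^ (2 * m + 1 + 1) - 1 = (β ^ (m + 1) - 1) * (β ^ (m + 1) + 1) := by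
      rw [show 2 * m + 1 + 1 = 2 * (m + 1) by ring, pow_mul, neg_sq]
      ring
    exact this ▸ dvd_mul_of_dvd_left hdvd _
  obtain ⟨a, b, hab⟩ := h.neg_left.exists_pow_succ_add_eq_one hdvd'
  exact ⟨2 * m + 1, a, b, hab ▸ isUnit_one⟩

theorem NumberField.RingOfIntegers.exists_root_of_root {K L : Type*} [Field K] [Field L]
    [Algebra K L] {a b : 𝓞 K} {e : ℕ} {ρ : L}
    (hρ : ρ ^ (e + 1) + algebraMap K L a * ρ ^ e + algebraMap K L b = 0) :
    ∃ r : 𝓞 L, r ^ (e + 1) + algebraMap (𝓞 K) (𝓞 L) a * r ^ e + algebraMap (𝓞 K) (𝓞 L) b = 0 := by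
  set F : (𝓞 K)[X] := X ^ (e + 1) + C a * X ^ e + C b
  have hF : F.Monic := by simp only [F]; monicity!
  have hFρ : aeval ρ F = 0 := by
    simp only [F, map_add, map_mul, map_pow, aeval_X, aeval_C]
    exact hρ
  set r := IsIntegralClosure.mk' (𝓞 L) ρ ⟨F, hF, hFρ⟩
  refine ⟨r, IsIntegralClosure.algebraMap_injective (𝓞 L) (𝓞 K) L ?_⟩
  have hr : algebraMap (𝓞 L) L r = ρ := IsIntegralClosure.algebraMap_mk' _ _ _
  simpa [F, aeval_algebraMap_apply, hr, ← IsScalarTower.algebraMap_apply] using hFρ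

theorem AdjoinRoot.aeval_root_factor {K : Type*} [Field K] {f : K[X]} (hf : f.natDegree ≠ 0) :
    aeval (root f.factor) f = 0 :=
  aeval_eq_zero_of_dvd_aeval_eq_zero (factor_dvd_of_natDegree_ne_zero hf)
    (by rw [aeval_eq, mk_self])

theorem Ideal.exists_mem_isCoprime_of_span_singleton_sup_eq_top {R : Type*} [CommRing R]
    {β : R} {I : Ideal R} (h : Ideal.span {β} ⊔ I = ⊤) : ∃ c ∈ I, IsCoprime β c := by
  obtain ⟨p, hp, c, hc, hpc⟩ := Submodule.mem_sup.mp (h ▸ Submodule.mem_top : (1 : R) ∈ _)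
  obtain ⟨x, rfl⟩ := Ideal.mem_span_singleton'.mp hp
  exact ⟨c, hc, x, 1, by rw [one_mul, hpc]⟩

theorem stmt15 (K : Type) [Field K] [NumberField K]
    (I : Ideal (𝓞 K)) (β : 𝓞 K) (hcop : Ideal.span {β} ⊔ I = ⊤) :
    ∃ (d : ℕ), 0 < d ∧ ∃ (a b : 𝓞 K) (L : Type) (_ : Field L) (_ : Algebra K L)
      (ρ : L),
      ρ ^ d + algebraMap K L (a : K) * ρ ^ (d - 1) + algebraMap K L (b : K) = 0 ∧
      IntermediateField.adjoin K {ρ} = ⊤ ∧ FiniteDimensional K L ∧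
      ∃ δ : (𝓞 L)ˣ,
        (δ : 𝓞 L) - algebraMap (𝓞 K) (𝓞 L) β ∈ Ideal.map (algebraMap (𝓞 K) (𝓞 L)) I := by
  obtain ⟨c, hcI, hβc⟩ := Ideal.exists_mem_isCoprime_of_span_singleton_sup_eq_top hcop
  obtain ⟨e, a, b, hunit⟩ := RingOfIntegers.exists_isUnit_pow_succ_add hβc
  set f : K[X] := X ^ (e + 1) + C (a : K) * X ^ e + C (b : K)
  have hf : f.natDegree ≠ 0 := by
    have : f.natDegree = e + 1 := by simp only [f]; compute_degree!
    omega
  have := fact_irreducible_factor f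
  set ρ := AdjoinRoot.root f.factor
  have hρ : ρ ^ (e + 1) + algebraMap K _ a * ρ ^ e + algebraMap K _ b = 0 := by
    simpa [f] using AdjoinRoot.aeval_root_factor hf
  obtain ⟨r, hr⟩ := RingOfIntegers.exists_root_of_root hρ
  have hδ := isUnit_mul_add_of_root hr (y := algebraMap (𝓞 K) _ β) (c := algebraMap (𝓞 K) _ c)
    (by simpa using hunit.map (algebraMap (𝓞 K) (𝓞 (AdjoinRoot f.factor))))
  refine ⟨e + 1, e.succ_pos, a, b, _, inferInstance, inferInstance, ρ, by simpa using hρ,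
    IntermediateField.adjoin_root_eq_top _,
    (AdjoinRoot.powerBasis (irreducible_factor f).ne_zero).finite, hδ.unit, ?_⟩
  simpa using Ideal.mul_mem_right r _ (Ideal.mem_map_of_mem (algebraMap (𝓞 K) _) hcI)
end
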